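/- arXiv:2406.00388 — 14 statements merged into one kernel-verified Lean document; each statement's English description precedes it below -/
import Mathlib

section
/- Products of causal spaces are causal spaces: given causal spaces 𝒞¹=(Ω¹,ℋ¹,ℙ¹,𝕂¹) and 𝒞²=(Ω²,ℋ²,ℙ²,𝕂²), the quadruple (Ω¹×Ω², ℋ¹⊗ℋ², ℙ¹⊗ℙ², 𝕂¹⊗𝕂²), where the product causal mechanism assigns to S¹∪S² the product kernel K¹_{S¹}⊗K²_{S²}, satisfies both axioms of a causal space: (i) the kernel indexed by the empty set equals ℙ¹⊗ℙ²; (ii) for all ω, all A ∈ ℋ¹_{S¹}⊗ℋ²_{S²} and all B ∈ ℋ¹⊗ℋ², the kernel satisfies K(ω, A∩B) = 𝟙_A(ω)·K(ω,B). -/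
open MeasureTheory

/-! By axiom (ii) with `B = Ω`, the kernel `K_S(ω, ·)` agrees with the Dirac measure `δ_ω` on
`ℋ_S`, and conversely such an agreement implies axiom (ii). Agreement on sub-σ-algebras passes
to products of finite measures, since measurable rectangles form a generating π-system; as
`δ_{ω₁} ⊗ δ_{ω₂} = δ_{(ω₁, ω₂)}`, the product kernel agrees with `δ_ω` on `ℋ¹_{S¹} ⊗ ℋ²_{S²}`. -/

/-- A causal space (Park et al.): a probability space `(Ω, ℋ, ℙ)` on a product measurable
space together with a family of sub-σ-algebras `ℋ_S` indexed by subsets `S` of the index set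
`T`, and a causal mechanism `𝕂 = {K_S}`, where each `K_S` is a transition probability kernel
from `(Ω, ℋ_S)` into `(Ω, ℋ)` satisfying the two causal space axioms. -/
structure CausalSpace (T : Type*) (Ω : Type*) [mΩ : MeasurableSpace Ω] where
  /-- the sub-σ-algebra `ℋ_S` generated by the coordinates in `S` -/
  H : Set T → MeasurableSpace Ω
  H_le : ∀ S, H S ≤ mΩ
  H_empty : H ∅ = ⊥
  H_univ : H Set.univ = mΩ
  H_mono : ∀ {S U : Set T}, S ⊆ U → H S ≤ H U
  /-- the probability measure -/
  P : Measure Ω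
  P_prob : IsProbabilityMeasure P
  /-- the causal mechanism: `K S ω` is the measure `K_S(ω, ·)` -/
  K : Set T → Ω → Measure Ω
  K_prob : ∀ S ω, IsProbabilityMeasure (K S ω)
  K_meas : ∀ (S : Set T) {A : Set Ω}, MeasurableSet A → Measurable[H S] fun ω => K S ω A
  K_empty : ∀ (ω : Ω) {A : Set Ω}, MeasurableSet A → K ∅ ω A = P A
  K_inter : ∀ (S : Set T) (ω : Ω) {A B : Set Ω}, MeasurableSet[H S] A → MeasurableSet B →
    K S ω (A ∩ B) = A.indicator (fun _ => (1 : ENNReal)) ω * K S ω B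

lemma MeasurableSpace.prod_mono {α β : Type*} {m₁ m₂ : MeasurableSpace α}
    {n₁ n₂ : MeasurableSpace β} (hm : m₁ ≤ m₂) (hn : n₁ ≤ n₂) : m₁.prod n₁ ≤ m₂.prod n₂ :=
  sup_le_sup (MeasurableSpace.comap_mono hm) (MeasurableSpace.comap_mono hn)

namespace MeasureTheory.Measure

lemma prod_apply_eq_of_apply_eq {Ω1 Ω2 : Type*} {m1 mΩ1 : MeasurableSpace Ω1}
    {m2 mΩ2 : MeasurableSpace Ω2} (hm1 : m1 ≤ mΩ1) (hm2 : m2 ≤ mΩ2)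
    {μ1 ν1 : Measure Ω1} {μ2 ν2 : Measure Ω2}
    [IsFiniteMeasure μ1] [IsFiniteMeasure μ2] [SFinite ν2]
    (h1 : ∀ s, MeasurableSet[m1] s → μ1 s = ν1 s) (h2 : ∀ t, MeasurableSet[m2] t → μ2 t = ν2 t)
    {A : Set (Ω1 × Ω2)} (hA : MeasurableSet[m1.prod m2] A) :
    μ1.prod μ2 A = ν1.prod ν2 A := by
  have h_rect : ∀ s, MeasurableSet[m1] s → ∀ t, MeasurableSet[m2] t →
      μ1.prod μ2 (s ×ˢ t) = ν1.prod ν2 (s ×ˢ t) := fun s hs t ht => by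
    rw [prod_prod, prod_prod, h1 s hs, h2 t ht]
  refine ext_on_measurableSpace_of_generate_finite _ _ ?_ (MeasurableSpace.prod_mono hm1 hm2)
    (@generateFrom_prod _ _ m1 m2).symm (@isPiSystem_prod _ _ m1 m2) ?_ hA
  · rintro _ ⟨s, hs, t, ht, rfl⟩
    exact h_rect s hs t ht
  · simpa only [Set.univ_prod_univ] using
      h_rect _ (@MeasurableSet.univ _ m1) _ (@MeasurableSet.univ _ m2)

lemma inter_eq_indicator_mul_of_apply_eq_dirac {Ω : Type*} {m mΩ : MeasurableSpace Ω} (hm : m ≤ mΩ)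
    {μ : Measure Ω} {ω : Ω} (hμ : ∀ A, MeasurableSet[m] A → μ A = dirac ω A)
    {A : Set Ω} (hA : MeasurableSet[m] A) (B : Set Ω) :
    μ (A ∩ B) = A.indicator (fun _ => 1) ω * μ B := by
  by_cases hω : ω ∈ A
  · have hAc : μ Aᶜ = 0 := by
      rw [hμ _ hA.compl, dirac_apply' _ (hm _ hA.compl), Set.indicator_of_notMem (by simpa)]
    rw [Set.inter_comm, measure_inter_conull hAc, Set.indicator_of_mem hω, one_mul]
  · have hA0 : μ A = 0 := by
      rw [hμ _ hA, dirac_apply' _ (hm _ hA), Set.indicator_of_notMem hω]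
    rw [measure_mono_null Set.inter_subset_left hA0, Set.indicator_of_notMem hω, zero_mul]

end MeasureTheory.Measure

namespace CausalSpace

variable {T Ω : Type*} [MeasurableSpace Ω] (C : CausalSpace T Ω)

lemma K_empty_eq_P (ω : Ω) : C.K ∅ ω = C.P :=
  Measure.ext fun _ hA => C.K_empty ω hA

lemma K_apply_eq_dirac (S : Set T) (ω : Ω) {A : Set Ω} (hA : MeasurableSet[C.H S] A) :
    C.K S ω A = Measure.dirac ω A := by
  have := C.K_prob S ω
  simpa [Measure.dirac_apply' _ (C.H_le S _ hA), Pi.one_def] using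
    C.K_inter S ω hA MeasurableSet.univ

end CausalSpace

/-- Products of causal spaces are causal spaces.  For causal spaces
`𝒞¹ = (Ω¹, ℋ¹, ℙ¹, 𝕂¹)` (index set `T¹`) and `𝒞² = (Ω², ℋ², ℙ², 𝕂²)` (index set `T²`),
the product causal mechanism assigns to `S ⊆ T¹ ⊕ T²` (decomposed as `S¹ ∪ S²`) the
product kernel `K¹_{S¹} ⊗ K²_{S²}`, and this quadruple satisfies both causal space axioms:
(i) the kernel indexed by `∅` equals `ℙ¹ ⊗ ℙ²`; (ii) `K(ω, A ∩ B) = 𝟙_A(ω) · K(ω, B)`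
for `A ∈ ℋ¹_{S¹} ⊗ ℋ²_{S²}` and `B ∈ ℋ¹ ⊗ ℋ²`. -/
theorem product_causal_space_is_causal_space {T1 T2 Ω1 Ω2 : Type*}
    [MeasurableSpace Ω1] [MeasurableSpace Ω2]
    (C1 : CausalSpace T1 Ω1) (C2 : CausalSpace T2 Ω2) :
    -- axiom (i): the kernel indexed by the empty set equals ℙ¹ ⊗ ℙ²
    (∀ ω : Ω1 × Ω2, ∀ A : Set (Ω1 × Ω2), MeasurableSet A →
      (C1.K ∅ ω.1).prod (C2.K ∅ ω.2) A = (C1.P.prod C2.P) A) ∧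
    -- axiom (ii)
    (∀ S : Set (T1 ⊕ T2), ∀ ω : Ω1 × Ω2, ∀ A B : Set (Ω1 × Ω2),
      MeasurableSet[(C1.H (Sum.inl ⁻¹' S)).prod (C2.H (Sum.inr ⁻¹' S))] A →
      MeasurableSet B →
      (C1.K (Sum.inl ⁻¹' S) ω.1).prod (C2.K (Sum.inr ⁻¹' S) ω.2) (A ∩ B)
        = A.indicator (fun _ => (1 : ENNReal)) ω
          * (C1.K (Sum.inl ⁻¹' S) ω.1).prod (C2.K (Sum.inr ⁻¹' S) ω.2) B) := by
  refine ⟨fun ω A _ => by rw [C1.K_empty_eq_P, C2.K_empty_eq_P], ?_⟩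
  intro S ω A B hA _
  have := C1.K_prob (Sum.inl ⁻¹' S) ω.1
  have := C2.K_prob (Sum.inr ⁻¹' S) ω.2
  refine Measure.inter_eq_indicator_mul_of_apply_eq_dirac
    (MeasurableSpace.prod_mono (C1.H_le _) (C2.H_le _)) (fun A' hA' => ?_) hA B
  rw [← Measure.dirac_prod_dirac]
  exact Measure.prod_apply_eq_of_apply_eq (C1.H_le _) (C2.H_le _)
    (fun _ => C1.K_apply_eq_dirac _ ω.1) (fun _ => C2.K_apply_eq_dirac _ ω.2) hA'
end

section
/- In a product causal space 𝒞¹⊗𝒞², the σ-algebra ℋ_{T¹} (corresponding to the first factor) has no causal effect on ℋ_{T²} (corresponding to the second factor): for every event A ∈ ℋ_{T²}, every S ⊆ T¹∪T², and every ω, the product causal kernel satisfies K_S(ω,A) = K_{S∖T¹}(ω,A). -/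
open MeasureTheory

/-- In the product causal space `𝒞¹ ⊗ 𝒞²`, the σ-algebra `ℋ_{T¹}` of the first
factor has no causal effect on `ℋ_{T²}` (identified with `{Ω¹ × A' : A' ∈ ℋ²}`): for every
`A' ∈ ℋ²`, every `S ⊆ T¹ ∪ T²` and every `ω`, the product causal kernel satisfies
`K_S(ω, Ω¹ × A') = K_{S ∖ T¹}(ω, Ω¹ × A')`. -/
theorem product_no_causal_effect {T1 T2 Ω1 Ω2 : Type*}
    [MeasurableSpace Ω1] [MeasurableSpace Ω2]
    (C1 : CausalSpace T1 Ω1) (C2 : CausalSpace T2 Ω2) :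
    ∀ A' : Set Ω2, MeasurableSet A' → ∀ S : Set (T1 ⊕ T2), ∀ ω : Ω1 × Ω2,
      (C1.K (Sum.inl ⁻¹' S) ω.1).prod (C2.K (Sum.inr ⁻¹' S) ω.2)
          ((Set.univ : Set Ω1) ×ˢ A')
        = (C1.K (Sum.inl ⁻¹' (S \ Set.range Sum.inl)) ω.1).prod
            (C2.K (Sum.inr ⁻¹' (S \ Set.range Sum.inl)) ω.2)
            ((Set.univ : Set Ω1) ×ˢ A') := by
  intro A' hA' S ω
  have h2 : Sum.inr ⁻¹' (S \ Set.range Sum.inl) = Sum.inr ⁻¹' S := by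
    ext t; simp [Set.mem_preimage, Set.mem_diff]
  have p1 := C1.K_prob (Sum.inl ⁻¹' S) ω.1
  have p2 := C1.K_prob (Sum.inl ⁻¹' (S \ Set.range Sum.inl)) ω.1
  haveI := C2.K_prob (Sum.inr ⁻¹' S) ω.2
  haveI := C2.K_prob (Sum.inr ⁻¹' (S \ Set.range Sum.inl)) ω.2
  rw [Measure.prod_prod, Measure.prod_prod, h2, measure_univ, measure_univ]
end

section
/- In a product causal space 𝒞¹⊗𝒞², the σ-algebras ℋ_{T¹} and ℋ_{T²} corresponding to the two factors are local sources of each other: for every A ∈ ℋ_{T²}, the function ω ↦ K_{T¹}(ω,A) is a version of the conditional probability ℙ_{ℋ_{T¹}}(A), where ℙ = ℙ¹⊗ℙ² and K_{T¹} is the product causal kernel indexed by T¹ (and symmetrically with T¹ and T² swapped). -/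
open MeasureTheory

/-- In the product causal space `𝒞¹ ⊗ 𝒞²`, the σ-algebras `ℋ_{T¹}` and `ℋ_{T²}`
of the two factors are local sources of each other: for every `A ∈ ℋ_{T²}` (i.e. `Ω¹ × A'`),
the product kernel `K_{T¹}(·, A)` is a version of the conditional probability
`ℙ_{ℋ_{T¹}}(A)` where `ℙ = ℙ¹ ⊗ ℙ²`, i.e. `∫_B K_{T¹}(ω, A) ℙ(dω) = ℙ(A ∩ B)` for every
`B ∈ ℋ_{T¹}` (i.e. `B₁ × Ω²`); and symmetrically with the two factors swapped. -/
theorem product_factors_are_sources {T1 T2 Ω1 Ω2 : Type*}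
    [MeasurableSpace Ω1] [MeasurableSpace Ω2]
    (C1 : CausalSpace T1 Ω1) (C2 : CausalSpace T2 Ω2) :
    -- ℋ_{T¹} is a local source of ℋ_{T²}
    (∀ A' : Set Ω2, MeasurableSet A' → ∀ B1 : Set Ω1, MeasurableSet B1 →
      ∫⁻ ω in B1 ×ˢ (Set.univ : Set Ω2),
          (C1.K Set.univ ω.1).prod (C2.K ∅ ω.2) ((Set.univ : Set Ω1) ×ˢ A')
          ∂(C1.P.prod C2.P)
        = (C1.P.prod C2.P) (((Set.univ : Set Ω1) ×ˢ A') ∩ (B1 ×ˢ (Set.univ : Set Ω2)))) ∧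
    -- ℋ_{T²} is a local source of ℋ_{T¹}
    (∀ A : Set Ω1, MeasurableSet A → ∀ B2 : Set Ω2, MeasurableSet B2 →
      ∫⁻ ω in (Set.univ : Set Ω1) ×ˢ B2,
          (C1.K ∅ ω.1).prod (C2.K Set.univ ω.2) (A ×ˢ (Set.univ : Set Ω2))
          ∂(C1.P.prod C2.P)
        = (C1.P.prod C2.P) ((A ×ˢ (Set.univ : Set Ω2)) ∩ ((Set.univ : Set Ω1) ×ˢ B2))) := by
  haveI := C1.P_prob
  haveI := C2.P_prob
  constructor
  · intro A' hA' B1 hB1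
    have hconst : ∀ ω : Ω1 × Ω2,
        (C1.K Set.univ ω.1).prod (C2.K ∅ ω.2) ((Set.univ : Set Ω1) ×ˢ A') = C2.P A' := by
      intro ω
      haveI := C1.K_prob Set.univ ω.1
      haveI := C2.K_prob ∅ ω.2
      rw [Measure.prod_prod, measure_univ, one_mul, C2.K_empty ω.2 hA']
    calc ∫⁻ ω in B1 ×ˢ (Set.univ : Set Ω2),
          (C1.K Set.univ ω.1).prod (C2.K ∅ ω.2) ((Set.univ : Set Ω1) ×ˢ A')
          ∂(C1.P.prod C2.P)
        = ∫⁻ _ in B1 ×ˢ (Set.univ : Set Ω2), C2.P A' ∂(C1.P.prod C2.P) := by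
          simp only [hconst]
      _ = C2.P A' * (C1.P.prod C2.P) (B1 ×ˢ (Set.univ : Set Ω2)) := by
          rw [setLIntegral_const]
      _ = (C1.P.prod C2.P) (((Set.univ : Set Ω1) ×ˢ A') ∩ (B1 ×ˢ (Set.univ : Set Ω2))) := by
          rw [Set.prod_inter_prod, Set.univ_inter, Set.inter_univ,
            Measure.prod_prod, Measure.prod_prod, measure_univ, mul_one]
          ring
  · intro A hA B2 hB2
    have hconst : ∀ ω : Ω1 × Ω2,
        (C1.K ∅ ω.1).prod (C2.K Set.univ ω.2) (A ×ˢ (Set.univ : Set Ω2)) = C1.P A := by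
      intro ω
      haveI := C1.K_prob ∅ ω.1
      haveI := C2.K_prob Set.univ ω.2
      rw [Measure.prod_prod, measure_univ, mul_one, C1.K_empty ω.1 hA]
    calc ∫⁻ ω in (Set.univ : Set Ω1) ×ˢ B2,
          (C1.K ∅ ω.1).prod (C2.K Set.univ ω.2) (A ×ˢ (Set.univ : Set Ω2))
          ∂(C1.P.prod C2.P)
        = ∫⁻ _ in (Set.univ : Set Ω1) ×ˢ B2, C1.P A ∂(C1.P.prod C2.P) := by
          simp only [hconst]
      _ = C1.P A * (C1.P.prod C2.P) ((Set.univ : Set Ω1) ×ˢ B2) := by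
          rw [setLIntegral_const]
      _ = (C1.P.prod C2.P) ((A ×ˢ (Set.univ : Set Ω2)) ∩ ((Set.univ : Set Ω1) ×ˢ B2)) := by
          rw [Set.prod_inter_prod, Set.univ_inter, Set.inter_univ,
            Measure.prod_prod, Measure.prod_prod, measure_univ, one_mul]
end

section
/- In the SCM with X₁=N₁, X₂=N₂, Y=X₁+X₂+U where N₁,N₂,U are independent standard Gaussians, X₁ and X₂ are causally independent on σ(Y): for every y ∈ ℝ and all Borel sets A, B ⊆ ℝ, the causal kernel obtained by intervening on Y satisfies K_Y(y, {X₁∈A, X₂∈B}) = K_Y(y, {X₁∈A}) · K_Y(y, {X₂∈B}), both sides being equal to ℙ(X₁∈A)·ℙ(X₂∈B). However, X₁ and X₂ are not conditionally independent given Y under ℙ. -/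
/-!
Intervening on `Y` leaves `(X₁, X₂)` with the product law `N(0,1) ⊗ N(0,1)`, which gives causal
independence at once. Observationally, `(X₁, Y)` and `(X₂, Y)` have the same law, so
`h = P(X₁ ∈ s | Y) = P(X₂ ∈ s | Y)`. Conditional independence given `Y` would then give
`E[h²] = P(X₁ ∈ s, X₂ ∈ s) = P(X₁ ∈ s)² = E[h]²`, so `h` is a.s. constant and `X₁` would be
independent of `Y`; but `Cov(X₁, Y) = Var X₁ = 1`.
-/

open MeasureTheory ProbabilityTheory

section ConditionalExpectation

variable {Ω : Type*} {m m0 : MeasurableSpace Ω} {μ : Measure Ω}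

lemma ae_eq_integral_of_integral_sq_eq [IsProbabilityMeasure μ] {X : Ω → ℝ} (hX : MemLp X 2 μ)
    (h : ∫ ω, X ω ^ 2 ∂μ = (∫ ω, X ω ∂μ) ^ 2) : ∀ᵐ ω ∂μ, X ω = μ[X] :=
  ae_eq_integral_of_variance_eq_zero hX (by rw [variance_eq_sub hX, Pi.pow_def, h, sub_self])

variable [IsFiniteMeasure μ]

lemma memLp_condExp_indicator (A : Set Ω) (p : ENNReal) : MemLp (μ⟦A | m⟧) p μ := by
  refine MemLp.of_bound integrable_condExp.aestronglyMeasurable 1 ?_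
  have hbdd : ∀ᵐ ω ∂μ, |A.indicator (fun _ => (1 : ℝ)) ω| ≤ 1 :=
    ae_of_all _ fun ω => by by_cases hω : ω ∈ A <;> simp [hω]
  simpa using ae_bdd_abs_condExp_of_ae_bdd_abs (m := m) hbdd

lemma setIntegral_condExp_indicator (hm : m ≤ m0) {A C : Set Ω} (hA : MeasurableSet A)
    (hC : MeasurableSet[m] C) : ∫ ω in C, (μ⟦A | m⟧) ω ∂μ = μ.real (A ∩ C) := by
  rw [setIntegral_condExp hm ((integrable_const (1 : ℝ)).indicator hA) hC,
    setIntegral_indicator hA, setIntegral_const, smul_eq_mul, mul_one, Set.inter_comm]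

lemma condExp_indicator_ae_eq_of_measure_inter_eq (hm : m ≤ m0) {A B : Set Ω}
    (hA : MeasurableSet A) (hB : MeasurableSet B)
    (h : ∀ C, MeasurableSet[m] C → μ (A ∩ C) = μ (B ∩ C)) : μ⟦A | m⟧ =ᵐ[μ] μ⟦B | m⟧ :=
  ae_eq_condExp_of_forall_setIntegral_eq hm ((integrable_const (1 : ℝ)).indicator hB)
    (fun _ _ _ => integrable_condExp.integrableOn)
    (fun C hC _ => by
      rw [← setIntegral_condExp hm ((integrable_const (1 : ℝ)).indicator hB) hC,
        setIntegral_condExp_indicator hm hA hC, setIntegral_condExp_indicator hm hB hC,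
        measureReal_def, measureReal_def, h C hC])
    stronglyMeasurable_condExp.aestronglyMeasurable

theorem measure_inter_eq_mul_of_condExp_eq_of_condIndep [IsProbabilityMeasure μ] (hm : m ≤ m0)
    {A B C : Set Ω} (hA : MeasurableSet A) (hB : MeasurableSet B)
    (hAB : μ⟦A | m⟧ =ᵐ[μ] μ⟦B | m⟧)
    (hcond : μ⟦A ∩ B | m⟧ =ᵐ[μ] fun ω => (μ⟦A | m⟧) ω * (μ⟦B | m⟧) ω)
    (hindep : μ (A ∩ B) = μ A * μ B) (hC : MeasurableSet[m] C) :
    μ (A ∩ C) = μ A * μ C := by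
  have hint : ∀ D, MeasurableSet D → ∫ ω, (μ⟦D | m⟧) ω ∂μ = μ.real D := fun D hD => by
    simpa using setIntegral_condExp_indicator (μ := μ) hm hD .univ
  have hBA : μ.real B = μ.real A := by
    rw [← hint B hB, ← integral_congr_ae hAB, hint A hA]
  have hsq : ∫ ω, (μ⟦A | m⟧) ω ^ 2 ∂μ = (∫ ω, (μ⟦A | m⟧) ω ∂μ) ^ 2 := calc
    ∫ ω, (μ⟦A | m⟧) ω ^ 2 ∂μ = ∫ ω, (μ⟦A ∩ B | m⟧) ω ∂μ := by
      refine integral_congr_ae ?_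
      filter_upwards [hAB, hcond] with ω h1 h2
      rw [h2, ← h1, sq]
    _ = μ.real A * μ.real B := by
      rw [hint _ (hA.inter hB), measureReal_def, hindep, ENNReal.toReal_mul, measureReal_def,
        measureReal_def]
    _ = (∫ ω, (μ⟦A | m⟧) ω ∂μ) ^ 2 := by rw [hBA, hint A hA, sq]
  have hconst := ae_eq_integral_of_integral_sq_eq (memLp_condExp_indicator A 2) hsq
  rw [hint A hA] at hconst
  have hreal : μ.real (A ∩ C) = μ.real A * μ.real C := by
    rw [← setIntegral_condExp_indicator hm hA hC,
      setIntegral_congr_ae (hm C hC) (hconst.mono fun ω h _ => h), setIntegral_const,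
      smul_eq_mul, mul_comm]
  rwa [measureReal_def, measureReal_def, measureReal_def, ← ENNReal.toReal_mul,
    ENNReal.toReal_eq_toReal_iff' (measure_ne_top _ _) (by finiteness)] at hreal

end ConditionalExpectation

section TripleProduct

variable {α β γ δ : Type*} [MeasurableSpace α] [MeasurableSpace β] [MeasurableSpace γ]
  [MeasurableSpace δ] (μ : Measure α) (ν : Measure β) (ρ : Measure γ)

lemma measurePreserving_swap_prod_prod [SFinite μ] [SFinite ρ] :
    MeasurePreserving (fun p : α × α × γ => (p.2.1, p.1, p.2.2))
      (μ.prod (μ.prod ρ)) (μ.prod (μ.prod ρ)) :=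
  ((measurePreserving_prodAssoc μ μ ρ).comp
    (Measure.measurePreserving_swap.prod (MeasurePreserving.id ρ))).comp
      (measurePreserving_prodAssoc μ μ ρ).symm

variable [SFinite ν] [IsProbabilityMeasure ρ]

lemma prod_prod_fst_mem_inter_snd_fst_mem (A : Set α) (B : Set β) :
    μ.prod (ν.prod ρ) ({p | p.1 ∈ A} ∩ {p | p.2.1 ∈ B}) = μ A * ν B := by
  have : {p : α × β × γ | p.1 ∈ A} ∩ {p | p.2.1 ∈ B} = A ×ˢ (B ×ˢ Set.univ) := by
    ext p; simp
  rw [this, Measure.prod_prod, Measure.prod_prod, measure_univ, mul_one]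

lemma prod_prod_fst_mem [IsProbabilityMeasure ν] (A : Set α) :
    μ.prod (ν.prod ρ) {p | p.1 ∈ A} = μ A := by
  simpa using prod_prod_fst_mem_inter_snd_fst_mem μ ν ρ A Set.univ

lemma prod_prod_snd_fst_mem [IsProbabilityMeasure μ] (B : Set β) :
    μ.prod (ν.prod ρ) {p | p.2.1 ∈ B} = ν B := by
  simpa using prod_prod_fst_mem_inter_snd_fst_mem μ ν ρ Set.univ B

variable {f : α × β × γ → δ}

lemma map_prod_prod_fst_mem_inter_snd_fst_mem (hf : Measurable f) {A : Set α} {B : Set β}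
    (hA : MeasurableSet A) (hB : MeasurableSet B) :
    (μ.prod (ν.prod ρ)).map (fun p => (p.1, p.2.1, f p)) ({p | p.1 ∈ A} ∩ {p | p.2.1 ∈ B})
      = μ A * ν B := by
  have hAB : MeasurableSet ({p : α × β × δ | p.1 ∈ A} ∩ {p | p.2.1 ∈ B}) :=
    (measurable_fst hA).inter (measurable_snd.fst hB)
  rw [Measure.map_apply (by fun_prop) hAB]
  exact prod_prod_fst_mem_inter_snd_fst_mem μ ν ρ A B

lemma map_prod_prod_fst_mem [IsProbabilityMeasure ν] (hf : Measurable f) {A : Set α}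
    (hA : MeasurableSet A) :
    (μ.prod (ν.prod ρ)).map (fun p => (p.1, p.2.1, f p)) {p | p.1 ∈ A} = μ A := by
  simpa using map_prod_prod_fst_mem_inter_snd_fst_mem μ ν ρ hf hA .univ

lemma map_prod_prod_snd_fst_mem [IsProbabilityMeasure μ] (hf : Measurable f) {B : Set β}
    (hB : MeasurableSet B) :
    (μ.prod (ν.prod ρ)).map (fun p => (p.1, p.2.1, f p)) {p | p.2.1 ∈ B} = ν B := by
  simpa using map_prod_prod_fst_mem_inter_snd_fst_mem μ ν ρ hf .univ hB

end TripleProduct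

section Covariance

variable {Ω Ω' : Type*} [MeasurableSpace Ω] [MeasurableSpace Ω'] {μ : Measure Ω} {ν : Measure Ω'}
  [IsProbabilityMeasure μ] [IsProbabilityMeasure ν]

lemma covariance_fst_fst_add_snd_prod {X : Ω → ℝ} {Y : Ω' → ℝ} (hX : MemLp X 2 μ)
    (hY : MemLp Y 2 ν) :
    cov[fun p => X p.1, fun p => X p.1 + Y p.2; μ.prod ν] = Var[X; μ] := by
  rw [show (fun p : Ω × Ω' => X p.1 + Y p.2) = (fun p => X p.1) + fun p => Y p.2 from rfl,
    covariance_add_right (hX.comp_fst ν) (hX.comp_fst ν) (hY.comp_snd μ),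
    covariance_fst_snd_prod hX hY, add_zero, covariance_self hX.aemeasurable.comp_fst,
    measurePreserving_fst.variance_fun_comp hX.aemeasurable]

end Covariance

section StructuralCausalModel

variable (μ ρ : Measure ℝ)

lemma map_scm_preimage_snd_fst_inter_eq [SFinite μ] [SFinite ρ] {s c : Set ℝ}
    (hs : MeasurableSet s) (hc : MeasurableSet c) :
    (μ.prod (μ.prod ρ)).map (fun n => (n.1, n.2.1, n.1 + n.2.1 + n.2.2))
        ((fun p => p.2.1) ⁻¹' s ∩ (fun p => p.2.2) ⁻¹' c)
      = (μ.prod (μ.prod ρ)).map (fun n => (n.1, n.2.1, n.1 + n.2.1 + n.2.2))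
        ((fun p => p.1) ⁻¹' s ∩ (fun p => p.2.2) ⁻¹' c) := by
  have hF : Measurable fun n : ℝ × ℝ × ℝ => (n.1, n.2.1, n.1 + n.2.1 + n.2.2) := by fun_prop
  rw [Measure.map_apply hF ((measurable_snd.fst hs).inter (measurable_snd.snd hc)),
    Measure.map_apply hF ((measurable_fst hs).inter (measurable_snd.snd hc)),
    ← (measurePreserving_swap_prod_prod μ ρ).measure_preimage
      (hF ((measurable_fst hs).inter (measurable_snd.snd hc))).nullMeasurableSet]
  congr 1
  ext n
  simp [add_comm n.1]

variable [IsProbabilityMeasure μ] [IsProbabilityMeasure ρ]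

lemma covariance_map_scm (hμ : MemLp id 2 μ) (hρ : MemLp id 2 ρ) :
    cov[fun p => p.1, fun p => p.2.2;
      (μ.prod (μ.prod ρ)).map (fun n => (n.1, n.2.1, n.1 + n.2.1 + n.2.2))] = Var[id; μ] := by
  rw [covariance_map_fun (by fun_prop) (by fun_prop) (by fun_prop)]
  simp_rw [add_assoc]
  exact covariance_fst_fst_add_snd_prod (Y := fun q : ℝ × ℝ => q.1 + q.2) hμ
    ((hμ.comp_fst ρ).add (hρ.comp_snd μ))

lemma not_indepFun_map_scm (hμ : MemLp id 2 μ) (hρ : MemLp id 2 ρ) (hvar : Var[id; μ] ≠ 0) :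
    ¬ IndepFun (fun p => p.1) (fun p => p.2.2)
      ((μ.prod (μ.prod ρ)).map (fun n => (n.1, n.2.1, n.1 + n.2.1 + n.2.2))) := by
  intro hind
  have hF : AEMeasurable (fun n : ℝ × ℝ × ℝ => (n.1, n.2.1, n.1 + n.2.1 + n.2.2))
      (μ.prod (μ.prod ρ)) := by fun_prop
  refine hvar ?_
  rw [← covariance_map_scm μ ρ hμ hρ]
  refine hind.covariance_eq_zero ?_ ?_
  · rw [memLp_map_measure_iff (by fun_prop) hF]
    exact hμ.comp_fst _
  · rw [memLp_map_measure_iff (by fun_prop) hF]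
    exact ((hμ.comp_fst _).add ((hμ.comp_fst ρ).comp_snd μ)).add ((hρ.comp_snd μ).comp_snd μ)

theorem not_condIndepFun_map_scm (hμ : MemLp id 2 μ) (hρ : MemLp id 2 ρ) (hvar : Var[id; μ] ≠ 0)
    (hm : MeasurableSpace.comap (fun p : ℝ × ℝ × ℝ => p.2.2) inferInstance
        ≤ (inferInstance : MeasurableSpace (ℝ × ℝ × ℝ))) :
    ¬ CondIndepFun (MeasurableSpace.comap (fun p : ℝ × ℝ × ℝ => p.2.2) inferInstance) hm
        (fun p : ℝ × ℝ × ℝ => p.1) (fun p : ℝ × ℝ × ℝ => p.2.1)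
        ((μ.prod (μ.prod ρ)).map (fun n => (n.1, n.2.1, n.1 + n.2.1 + n.2.2))) := by
  intro hCI
  have hF : Measurable fun n : ℝ × ℝ × ℝ => n.1 + n.2.1 + n.2.2 := by fun_prop
  have := Measure.isProbabilityMeasure_map (μ := μ.prod (μ.prod ρ))
    (f := fun n : ℝ × ℝ × ℝ => (n.1, n.2.1, n.1 + n.2.1 + n.2.2)) (by fun_prop)
  refine not_indepFun_map_scm μ ρ hμ hρ hvar ?_
  rw [indepFun_iff_measure_inter_preimage_eq_mul]
  intro s c hs hc
  refine measure_inter_eq_mul_of_condExp_eq_of_condIndep hm (measurable_fst hs)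
    (measurable_snd.fst hs) ?_ ?_ ?_ ⟨c, hc, rfl⟩
  · refine condExp_indicator_ae_eq_of_measure_inter_eq hm (measurable_fst hs)
      (measurable_snd.fst hs) ?_
    rintro _ ⟨c, hc, rfl⟩
    exact (map_scm_preimage_snd_fst_inter_eq μ ρ hs hc).symm
  · exact (condIndepFun_iff_condExp_inter_preimage_eq_mul measurable_fst measurable_snd.fst).mp
      hCI s s hs hs
  · exact (map_prod_prod_fst_mem_inter_snd_fst_mem μ μ ρ hF hs hs).trans
      (congrArg₂ (· * ·) (map_prod_prod_fst_mem μ μ ρ hF hs).symm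
        (map_prod_prod_snd_fst_mem μ μ ρ hF hs).symm)

end StructuralCausalModel

/-- In the SCM `X₁ = N₁`, `X₂ = N₂`, `Y = X₁ + X₂ + U` with `N₁, N₂, U`
independent standard Gaussians (joint law `ℙ` of `(X₁, X₂, Y)` on `ℝ³`), `X₁` and `X₂` are
causally independent on `σ(Y)`: for the causal kernel
`K_Y(y, ·) = N(0,1) ⊗ N(0,1) ⊗ δ_y` of intervening on `Y`, for every `y` and Borel `A, B`,
`K_Y(y, {X₁ ∈ A} ∩ {X₂ ∈ B}) = K_Y(y, {X₁ ∈ A}) · K_Y(y, {X₂ ∈ B})`, both sides being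
`ℙ(X₁ ∈ A) · ℙ(X₂ ∈ B)`.  However, `X₁` and `X₂` are not conditionally independent
given `Y` under `ℙ`. -/
theorem causally_independent_not_conditionally_independent
    (P : Measure (ℝ × ℝ × ℝ)) [IsProbabilityMeasure P]
    (hP : P = Measure.map (fun p : ℝ × ℝ × ℝ => (p.1, p.2.1, p.1 + p.2.1 + p.2.2))
        ((gaussianReal 0 1).prod ((gaussianReal 0 1).prod (gaussianReal 0 1))))
    (KY : ℝ → Measure (ℝ × ℝ × ℝ))
    (hKY : ∀ y : ℝ, KY y = (gaussianReal 0 1).prod ((gaussianReal 0 1).prod (Measure.dirac y)))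
    (hm : MeasurableSpace.comap (fun p : ℝ × ℝ × ℝ => p.2.2) inferInstance
        ≤ (inferInstance : MeasurableSpace (ℝ × ℝ × ℝ))) :
    (∀ y : ℝ, ∀ A B : Set ℝ, MeasurableSet A → MeasurableSet B →
      KY y ({p : ℝ × ℝ × ℝ | p.1 ∈ A} ∩ {p : ℝ × ℝ × ℝ | p.2.1 ∈ B})
          = KY y {p : ℝ × ℝ × ℝ | p.1 ∈ A} * KY y {p : ℝ × ℝ × ℝ | p.2.1 ∈ B} ∧
      KY y ({p : ℝ × ℝ × ℝ | p.1 ∈ A} ∩ {p : ℝ × ℝ × ℝ | p.2.1 ∈ B})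
          = gaussianReal 0 1 A * gaussianReal 0 1 B ∧
      P {p : ℝ × ℝ × ℝ | p.1 ∈ A} = gaussianReal 0 1 A ∧
      P {p : ℝ × ℝ × ℝ | p.2.1 ∈ B} = gaussianReal 0 1 B) ∧
    ¬ CondIndepFun (MeasurableSpace.comap (fun p : ℝ × ℝ × ℝ => p.2.2) inferInstance) hm
        (fun p : ℝ × ℝ × ℝ => p.1) (fun p : ℝ × ℝ × ℝ => p.2.1) P := by
  subst hP
  have hF : Measurable fun n : ℝ × ℝ × ℝ => n.1 + n.2.1 + n.2.2 := by fun_prop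
  refine ⟨fun y A B hA hB => ?_, not_condIndepFun_map_scm _ _ (memLp_id_gaussianReal 2)
    (memLp_id_gaussianReal 2) (by simp [variance_id_gaussianReal]) hm⟩
  rw [hKY y, prod_prod_fst_mem_inter_snd_fst_mem, prod_prod_fst_mem, prod_prod_snd_fst_mem,
    map_prod_prod_fst_mem _ _ _ hF hA, map_prod_prod_snd_fst_mem _ _ _ hF hB]
  exact ⟨rfl, rfl, rfl, rfl⟩
end

section
/- Interventional consistency of the Gaussian abstraction on X-interventions: with f(x₁,x₂,y₁,y₂)=(x₁+x₂, y₁+2y₂), the pushforward along f of the causal kernel K_{\{X₁,X₂\}}((x₁,x₂,y₁,y₂),·) = δ_{(x₁,x₂)} ⊗ N((3x₁+x₂, x₂), Id₂) equals L_X(f(x₁,x₂,y₁,y₂),·), where L_X((x,y),·) = δ_x ⊗ N(3x,5); i.e. both equal δ_{x₁+x₂} ⊗ N(3x₁+3x₂, 5). -/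
/-! The Dirac factors are carried along by `f`, while on the Gaussian factors `f` acts as
`(y₁, y₂) ↦ y₁ + 2 y₂`. Scaling `N(x₂, 1)` by `2` gives `N(2x₂, 4)`, and the convolution of
independent Gaussians adds means and variances, so the second coordinate is distributed as
`N(3x₁ + x₂ + 2x₂, 1 + 4) = N(3(x₁ + x₂), 5)`, which is `L_X` at `x₁ + x₂`. -/

open MeasureTheory ProbabilityTheory
open scoped NNReal

namespace MeasureTheory.Measure

variable {α β γ : Type*} [MeasurableSpace α] [MeasurableSpace β] [MeasurableSpace γ]

lemma map_dirac_prod {f : α × β → γ} (hf : Measurable f) (a : α) (ν : Measure β) [SFinite ν] :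
    ((dirac a).prod ν).map f = ν.map (fun b => f (a, b)) := by
  rw [dirac_prod, map_map hf measurable_prodMk_left]
  rfl

end MeasureTheory.Measure

namespace ProbabilityTheory

open Measure

lemma gaussianReal_prod_map_add_const_mul (m₁ m₂ : ℝ) (v₁ v₂ : ℝ≥0) (c : ℝ) :
    ((gaussianReal m₁ v₁).prod (gaussianReal m₂ v₂)).map (fun z => z.1 + c * z.2)
      = gaussianReal (m₁ + c * m₂) (v₁ + .mk (c ^ 2) (sq_nonneg c) * v₂) := by
  have hsplit : (fun z : ℝ × ℝ => z.1 + c * z.2)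
      = (fun z : ℝ × ℝ => z.1 + z.2) ∘ Prod.map id (c * ·) := rfl
  rw [hsplit, ← map_map (by fun_prop) (by fun_prop),
    ← map_prod_map _ _ measurable_id (by fun_prop), map_id,
    gaussianReal_map_const_mul, ← conv, gaussianReal_conv_gaussianReal]

end ProbabilityTheory

open Measure in
lemma map_interventional_kernel_eq (x₁ x₂ : ℝ) :
    ((dirac x₁).prod ((dirac x₂).prod
        ((gaussianReal (3 * x₁ + x₂) 1).prod (gaussianReal x₂ 1)))).map
          (fun q : ℝ × ℝ × ℝ × ℝ => (q.1 + q.2.1, q.2.2.1 + 2 * q.2.2.2))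
      = (dirac (x₁ + x₂)).prod (gaussianReal (3 * (x₁ + x₂)) 5) := by
  have hY : ((gaussianReal (3 * x₁ + x₂) 1).prod (gaussianReal x₂ 1)).map
      (fun y => y.1 + 2 * y.2) = gaussianReal (3 * (x₁ + x₂)) 5 := by
    rw [gaussianReal_prod_map_add_const_mul]
    congr 1
    · ring
    · ext; norm_num
  rw [map_dirac_prod (by fun_prop), map_dirac_prod (by fun_prop), dirac_prod, ← hY,
    map_map measurable_prodMk_left (by fun_prop)]
  rfl

/-- Interventional consistency of the Gaussian abstraction on X-interventions:
with `f(x₁,x₂,y₁,y₂) = (x₁+x₂, y₁+2y₂)`, the pushforward along `f` of the causal kernel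
`K_{X₁,X₂}((x₁,x₂,y₁,y₂), ·) = δ_{(x₁,x₂)} ⊗ N((3x₁+x₂, x₂), Id₂)` equals
`L_X(f(x₁,x₂,y₁,y₂), ·)` where `L_X((x,y), ·) = δ_x ⊗ N(3x, 5)`; both equal
`δ_{x₁+x₂} ⊗ N(3x₁+3x₂, 5)`. -/
theorem abstraction_interventional_consistency_X
    (K : ℝ × ℝ × ℝ × ℝ → Measure (ℝ × ℝ × ℝ × ℝ))
    (hK : ∀ ω : ℝ × ℝ × ℝ × ℝ, K ω = (Measure.dirac ω.1).prod ((Measure.dirac ω.2.1).prod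
        ((gaussianReal (3 * ω.1 + ω.2.1) 1).prod (gaussianReal ω.2.1 1))))
    (L : ℝ × ℝ → Measure (ℝ × ℝ))
    (hL : ∀ p : ℝ × ℝ, L p = (Measure.dirac p.1).prod (gaussianReal (3 * p.1) 5)) :
    ∀ ω : ℝ × ℝ × ℝ × ℝ,
      Measure.map (fun q : ℝ × ℝ × ℝ × ℝ => (q.1 + q.2.1, q.2.2.1 + 2 * q.2.2.2)) (K ω)
          = L (ω.1 + ω.2.1, ω.2.2.1 + 2 * ω.2.2.2) ∧
      L (ω.1 + ω.2.1, ω.2.2.1 + 2 * ω.2.2.2)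
          = (Measure.dirac (ω.1 + ω.2.1)).prod (gaussianReal (3 * ω.1 + 3 * ω.2.1) 5) := by
  intro ω
  rw [hK, hL, map_interventional_kernel_eq, mul_add]
  exact ⟨rfl, rfl⟩
end

section
/- The inclusion of a causal space into a product is a causal transformation: given causal spaces 𝒞¹ and 𝒞², define ρ(t)=t on T¹ and the stochastic kernel κ(ω,·)=δ_ω ⊗ ℙ² from Ω¹ to Ω¹×Ω². Then (κ,ρ): 𝒞¹ → 𝒞¹⊗𝒞² is admissible, satisfies distributional consistency ∫ℙ¹(dω)κ(ω,A) = (ℙ¹⊗ℙ²)(A), and satisfies interventional consistency: for all S ⊆ T¹, ω ∈ Ω¹ and A ∈ ℋ¹⊗ℋ², ∫K¹_S(ω,dω')κ(ω',A) = ∫κ(ω,dω')(K¹_S⊗K²_∅)(ω',A). -/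
open MeasureTheory

section CausalAux
set_option linter.unusedSectionVars false

lemma dirac_prod_apply'' {Ω1 Ω2 : Type*} [MeasurableSpace Ω1] [MeasurableSpace Ω2]
    (ν : Measure Ω2) [IsProbabilityMeasure ν] (ω : Ω1)
    {A : Set (Ω1 × Ω2)} (hA : MeasurableSet A) :
    (Measure.dirac ω).prod ν A = ν (Prod.mk ω ⁻¹' A) := by
  rw [Measure.prod_apply hA, lintegral_dirac' _ (measurable_measure_prodMk_left hA)]

lemma prod_bot_eq' {Ω1 Ω2 : Type*} (m : MeasurableSpace Ω1) :
    (m.prod (⊥ : MeasurableSpace Ω2)) = m.comap Prod.fst := by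
  rw [MeasurableSpace.prod, MeasurableSpace.comap_bot, sup_bot_eq]

end CausalAux

/-- The inclusion of a causal space into a product is a causal transformation.
With `ρ = Sum.inl : T¹ → T¹ ⊕ T²` and the stochastic kernel `κ(ω, ·) = δ_ω ⊗ ℙ²`, the pair
`(κ, ρ) : 𝒞¹ → 𝒞¹ ⊗ 𝒞²` is a probability kernel, is admissible (for `S ⊆ T¹`, `κ(·, A)` is
`ℋ¹_S`-measurable for `A ∈ ℋ_{inl(S)} = ℋ¹_S ⊗ ℋ²_∅`), satisfies distributional consistency
`∫ ℙ¹(dω) κ(ω, A) = (ℙ¹ ⊗ ℙ²)(A)`, and interventional consistency: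
`∫ K¹_S(ω, dω') κ(ω', A) = ∫ κ(ω, dω') (K¹_S ⊗ K²_∅)(ω', A)` for all `S ⊆ T¹`, `ω`, `A`. -/


theorem inclusion_is_causal_transformation {T1 T2 Ω1 Ω2 : Type*}
    [MeasurableSpace Ω1] [MeasurableSpace Ω2]
    (C1 : CausalSpace T1 Ω1) (C2 : CausalSpace T2 Ω2) :
    -- κ is a probability kernel
    (∀ ω : Ω1, IsProbabilityMeasure ((Measure.dirac ω).prod C2.P)) ∧
    (∀ A : Set (Ω1 × Ω2), MeasurableSet A →
      Measurable fun ω : Ω1 => (Measure.dirac ω).prod C2.P A) ∧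
    -- admissibility
    (∀ S : Set T1, ∀ A : Set (Ω1 × Ω2),
      MeasurableSet[(C1.H S).prod (C2.H ∅)] A →
      Measurable[C1.H S] fun ω : Ω1 => (Measure.dirac ω).prod C2.P A) ∧
    -- distributional consistency
    (∀ A : Set (Ω1 × Ω2), MeasurableSet A →
      ∫⁻ ω, (Measure.dirac ω).prod C2.P A ∂C1.P = (C1.P.prod C2.P) A) ∧
    -- interventional consistency
    (∀ S : Set T1, ∀ ω : Ω1, ∀ A : Set (Ω1 × Ω2), MeasurableSet A →
      ∫⁻ ω', (Measure.dirac ω').prod C2.P A ∂(C1.K S ω)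
        = ∫⁻ p, (C1.K S p.1).prod (C2.K ∅ p.2) A ∂((Measure.dirac ω).prod C2.P)) := by
  haveI := C2.P_prob
  classical
  have hκ : ∀ (ω : Ω1) {A : Set (Ω1 × Ω2)}, MeasurableSet A →
      (Measure.dirac ω).prod C2.P A = C2.P (Prod.mk ω ⁻¹' A) :=
    fun ω _ hA => dirac_prod_apply'' C2.P ω hA
  refine ⟨fun ω => inferInstance, ?_, ?_, ?_, ?_⟩
  · intro A hA
    simp only [fun ω => hκ ω hA]
    exact measurable_measure_prodMk_left hA
  · -- admissibility
    intro S A hA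
    rw [C2.H_empty, prod_bot_eq'] at hA
    obtain ⟨B, hB, rfl⟩ := hA
    have hBm : MeasurableSet B := C1.H_le S _ hB
    have hAm : MeasurableSet (Prod.fst ⁻¹' B : Set (Ω1 × Ω2)) :=
      (measurable_fst hBm)
    have key : (fun ω : Ω1 => (Measure.dirac ω).prod C2.P (Prod.fst ⁻¹' B))
        = B.indicator (fun _ => C2.P Set.univ) := by
      funext ω
      rw [hκ ω hAm]
      by_cases h : ω ∈ B
      · have : (Prod.mk ω ⁻¹' (Prod.fst ⁻¹' B) : Set Ω2) = Set.univ := by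
          ext y; simp [h]
        rw [this, Set.indicator_of_mem h]
      · have : (Prod.mk ω ⁻¹' (Prod.fst ⁻¹' B) : Set Ω2) = ∅ := by
          ext y; simp [h]
        rw [this, Set.indicator_of_notMem h]
        simp
    rw [key]
    exact Measurable.indicator measurable_const hB
  · -- distributional consistency
    intro A hA
    simp only [fun ω => hκ ω hA]
    exact (Measure.prod_apply hA).symm
  · -- interventional consistency
    intro S ω A hA
    haveI := C1.K_prob
    haveI := fun x => C1.K_prob S x
    -- K² ∅ = P² as measures
    have hK2 : ∀ y : Ω2, C2.K ∅ y = C2.P :=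
      fun y => Measure.ext fun s hs => C2.K_empty y hs
    -- the kernel x ↦ K¹_S x
    set k : ProbabilityTheory.Kernel Ω1 Ω1 :=
      { toFun := C1.K S
        measurable' := Measure.measurable_of_measurable_coe _ fun s hs =>
          (C1.K_meas S hs).mono (C1.H_le S) le_rfl } with hk
    haveI : ProbabilityTheory.IsMarkovKernel k := ⟨fun x => C1.K_prob S x⟩
    have hf : Measurable fun x : Ω1 => (C1.K S x).prod C2.P A := by
      have := (ProbabilityTheory.Kernel.prod k
        (ProbabilityTheory.Kernel.const Ω1 C2.P)).measurable_coe hA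
      simpa [ProbabilityTheory.Kernel.prod_apply, hk] using this
    calc ∫⁻ ω', (Measure.dirac ω').prod C2.P A ∂(C1.K S ω)
        = ∫⁻ ω', C2.P (Prod.mk ω' ⁻¹' A) ∂(C1.K S ω) := by
          simp only [fun ω' => hκ ω' hA]
      _ = (C1.K S ω).prod C2.P A := (Measure.prod_apply hA).symm
      _ = ∫⁻ p, (C1.K S p.1).prod C2.P A ∂((Measure.dirac ω).prod C2.P) := by
          rw [lintegral_prod (fun p : Ω1 × Ω2 => ((C1.K S p.1).prod C2.P) A) ((hf.comp measurable_fst).aemeasurable)]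
          simp [lintegral_dirac' _ hf]
      _ = ∫⁻ p, (C1.K S p.1).prod (C2.K ∅ p.2) A ∂((Measure.dirac ω).prod C2.P) := by
          simp only [hK2]
end

section
/- Composition of causal transformations: if (κ₁,ρ₁): 𝒞¹→𝒞² and (κ₂,ρ₂): 𝒞²→𝒞³ are causal transformations and (κ₁,ρ₁) is an abstraction (i.e. ρ₁: T¹→T² is surjective), then the pair (κ₁∘κ₂, ρ₁∘ρ₂): 𝒞¹→𝒞³, where (κ₁∘κ₂)(ω,A) = ∫κ₁(ω,dω₂)κ₂(ω₂,A), is a causal transformation; in particular it is admissible and satisfies both distributional and interventional consistency. -/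
open MeasureTheory

/-- A causal transformation `(κ, ρ) : 𝒞¹ → 𝒞²`: a probability kernel `κ` from `(Ω¹, ℋ¹)` to
`(Ω², ℋ²)` together with `ρ : T¹ → T²` such that the pair is admissible and satisfies
distributional and interventional consistency. -/
structure IsCausalTransformation {T1 T2 Ω1 Ω2 : Type*}
    [MeasurableSpace Ω1] [MeasurableSpace Ω2]
    (C1 : CausalSpace T1 Ω1) (C2 : CausalSpace T2 Ω2)
    (κ : Ω1 → Measure Ω2) (ρ : T1 → T2) : Prop where
  /-- `κ` is a probability kernel -/
  kernel_prob : ∀ ω, IsProbabilityMeasure (κ ω)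
  kernel_meas : ∀ A : Set Ω2, MeasurableSet A → Measurable fun ω => κ ω A
  /-- admissibility: `κ(·, A)` is `ℋ¹_{ρ⁻¹(S)}`-measurable for `S ⊆ ρ(T¹)`, `A ∈ ℋ²_S` -/
  admissible : ∀ S : Set T2, S ⊆ Set.range ρ → ∀ A : Set Ω2,
    MeasurableSet[C2.H S] A → Measurable[C1.H (ρ ⁻¹' S)] fun ω => κ ω A
  /-- distributional consistency -/
  dist : ∀ A : Set Ω2, MeasurableSet A → ∫⁻ ω, κ ω A ∂C1.P = C2.P A
  /-- interventional consistency -/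
  interv : ∀ S : Set T2, S ⊆ Set.range ρ → ∀ A : Set Ω2,
    MeasurableSet[C2.H (Set.range ρ)] A → ∀ ω : Ω1,
    ∫⁻ ω', κ ω' A ∂(C1.K (ρ ⁻¹' S) ω) = ∫⁻ ω', C2.K S ω' A ∂(κ ω)

/-! Everything reduces to associativity of `Measure.bind`. Surjectivity of `ρ₁` makes
`ℋ²_{ρ₁(T¹)}` the whole σ-algebra, so interventional consistency of `κ₁` becomes an equality of
measures `K¹_{ρ₁⁻¹ U}(ω, ·) ∘ κ₁ = κ₁(ω, ·) ∘ K²_U`, which can be composed with `κ₂`. -/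

theorem Measure.measurable_lintegral_of_le {α β : Type*} {mα : MeasurableSpace α}
    {mβ mβ' : MeasurableSpace β} (hle : mβ' ≤ mβ) {κ : α → Measure[mβ] β}
    (hκ : ∀ s, MeasurableSet[mβ'] s → Measurable fun a => κ a s)
    {g : β → ENNReal} (hg : Measurable[mβ'] g) :
    Measurable fun a => ∫⁻ b, g b ∂κ a := by
  have htrim : Measurable fun a => (κ a).trim hle :=
    Measure.measurable_of_measurable_coe _ fun s hs => by
      simpa only [trim_measurableSet_eq hle hs] using hκ s hs
  have := (Measure.measurable_lintegral hg).comp htrim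
  simpa only [Function.comp_def, lintegral_trim hle hg] using this

theorem Measurable.measure_bind {α β γ : Type*} [MeasurableSpace α] [MeasurableSpace β]
    [MeasurableSpace γ] {f : α → Measure β} {g : β → Measure γ} (hf : Measurable f)
    (hg : Measurable g) : Measurable fun a => (f a).bind g :=
  (Measure.measurable_bind' hg).comp hf

theorem Measure.lintegral_bind_apply {α β γ : Type*} [MeasurableSpace α] [MeasurableSpace β]
    [MeasurableSpace γ] {μ : Measure α} {f : α → Measure β} {g : β → Measure γ}
    (hf : Measurable f) (hg : Measurable g) {s : Set γ} (hs : MeasurableSet s) :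
    ∫⁻ a, (f a).bind g s ∂μ = (μ.bind f).bind g s := by
  rw [Measure.bind_bind hf.aemeasurable hg.aemeasurable,
    Measure.bind_apply hs (hf.measure_bind hg).aemeasurable]

theorem CausalSpace.measurable_K {T Ω : Type*} [MeasurableSpace Ω] (C : CausalSpace T Ω)
    (S : Set T) : Measurable (C.K S) :=
  Measure.measurable_of_measurable_coe _ fun _ hs => (C.K_meas S hs).mono (C.H_le S) le_rfl

namespace IsCausalTransformation

variable {T1 T2 T3 Ω1 Ω2 Ω3 : Type*} [MeasurableSpace Ω1] [MeasurableSpace Ω2]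
  [MeasurableSpace Ω3] {C1 : CausalSpace T1 Ω1} {C2 : CausalSpace T2 Ω2}
  {C3 : CausalSpace T3 Ω3} {κ1 : Ω1 → Measure Ω2} {ρ1 : T1 → T2} {κ2 : Ω2 → Measure Ω3}
  {ρ2 : T2 → T3}

theorem measurable (h : IsCausalTransformation C1 C2 κ1 ρ1) : Measurable κ1 :=
  Measure.measurable_of_measurable_coe _ h.kernel_meas

theorem bind_P (h : IsCausalTransformation C1 C2 κ1 ρ1) : C1.P.bind κ1 = C2.P := by
  ext A hA
  rw [Measure.bind_apply hA h.measurable.aemeasurable, h.dist A hA]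

theorem bind_K_preimage (h : IsCausalTransformation C1 C2 κ1 ρ1)
    (hρ : Function.Surjective ρ1) (U : Set T2) (ω : Ω1) :
    (C1.K (ρ1 ⁻¹' U) ω).bind κ1 = (κ1 ω).bind (C2.K U) := by
  ext B hB
  have hB' : MeasurableSet[C2.H (Set.range ρ1)] B := by rwa [hρ.range_eq, C2.H_univ]
  rw [Measure.bind_apply hB h.measurable.aemeasurable,
    Measure.bind_apply hB (C2.measurable_K U).aemeasurable]
  exact h.interv U (by simp [hρ.range_eq]) B hB' ω

theorem admissible_comp (h1 : IsCausalTransformation C1 C2 κ1 ρ1)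
    (h2 : IsCausalTransformation C2 C3 κ2 ρ2) (hρ1 : Function.Surjective ρ1)
    (S : Set T3) (hS : S ⊆ Set.range (ρ2 ∘ ρ1)) (A : Set Ω3)
    (hA : MeasurableSet[C3.H S] A) :
    Measurable[C1.H ((ρ2 ∘ ρ1) ⁻¹' S)] fun ω => (κ1 ω).bind κ2 A := by
  have hκ2A : Measurable[C2.H (ρ2 ⁻¹' S)] fun ω2 => κ2 ω2 A :=
    h2.admissible S (hS.trans (Set.range_comp_subset_range ρ1 ρ2)) A hA
  have hκ1 := h1.admissible (ρ2 ⁻¹' S) (by simp [hρ1.range_eq])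
  simpa only [Measure.bind_apply (C3.H_le S A hA) h2.measurable.aemeasurable] using
    Measure.measurable_lintegral_of_le (C2.H_le _) hκ1 hκ2A

theorem interv_comp (h1 : IsCausalTransformation C1 C2 κ1 ρ1)
    (h2 : IsCausalTransformation C2 C3 κ2 ρ2) (hρ1 : Function.Surjective ρ1)
    (S : Set T3) (hS : S ⊆ Set.range (ρ2 ∘ ρ1)) (A : Set Ω3)
    (hA : MeasurableSet[C3.H (Set.range (ρ2 ∘ ρ1))] A) (ω : Ω1) :
    ∫⁻ ω', (κ1 ω').bind κ2 A ∂(C1.K ((ρ2 ∘ ρ1) ⁻¹' S) ω) =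
      ∫⁻ ω', C3.K S ω' A ∂((κ1 ω).bind κ2) := by
  rw [hρ1.range_comp] at hS hA
  have hAm : MeasurableSet A := C3.H_le _ A hA
  calc ∫⁻ ω', (κ1 ω').bind κ2 A ∂(C1.K ((ρ2 ∘ ρ1) ⁻¹' S) ω)
      = ((κ1 ω).bind (C2.K (ρ2 ⁻¹' S))).bind κ2 A := by
        rw [Measure.lintegral_bind_apply h1.measurable h2.measurable hAm, Set.preimage_comp,
          h1.bind_K_preimage hρ1]
    _ = ∫⁻ ω2, ∫⁻ ω3, κ2 ω3 A ∂(C2.K (ρ2 ⁻¹' S) ω2) ∂(κ1 ω) := by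
        rw [← Measure.lintegral_bind_apply (C2.measurable_K _) h2.measurable hAm]
        simp only [Measure.bind_apply hAm h2.measurable.aemeasurable]
    _ = ∫⁻ ω2, ∫⁻ ω3, C3.K S ω3 A ∂(κ2 ω2) ∂(κ1 ω) := by
        simp only [h2.interv S hS A hA]
    _ = ∫⁻ ω', C3.K S ω' A ∂((κ1 ω).bind κ2) :=
        (Measure.lintegral_bind h2.measurable.aemeasurable
          ((Measure.measurable_coe hAm).comp (C3.measurable_K S)).aemeasurable).symm

end IsCausalTransformation

/-- Composition of causal transformations.  If `(κ₁, ρ₁) : 𝒞¹ → 𝒞²` and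
`(κ₂, ρ₂) : 𝒞² → 𝒞³` are causal transformations and `(κ₁, ρ₁)` is an abstraction (`ρ₁`
surjective), then the concatenation `((κ₁ ∘ κ₂), ρ₂ ∘ ρ₁) : 𝒞¹ → 𝒞³`, where
`(κ₁ ∘ κ₂)(ω, A) = ∫ κ₁(ω, dω₂) κ₂(ω₂, A)`, is a causal transformation. -/
theorem composition_of_causal_transformations {T1 T2 T3 Ω1 Ω2 Ω3 : Type*}
    [MeasurableSpace Ω1] [MeasurableSpace Ω2] [MeasurableSpace Ω3]
    (C1 : CausalSpace T1 Ω1) (C2 : CausalSpace T2 Ω2) (C3 : CausalSpace T3 Ω3)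
    (κ1 : Ω1 → Measure Ω2) (ρ1 : T1 → T2) (κ2 : Ω2 → Measure Ω3) (ρ2 : T2 → T3)
    (h1 : IsCausalTransformation C1 C2 κ1 ρ1)
    (h2 : IsCausalTransformation C2 C3 κ2 ρ2)
    (habs : Function.Surjective ρ1) :
    IsCausalTransformation C1 C3 (fun ω => (κ1 ω).bind κ2) (ρ2 ∘ ρ1) := by
  exact {
    kernel_prob ω :=
      have := h1.kernel_prob ω
      isProbabilityMeasure_bind h2.measurable.aemeasurable (ae_of_all _ h2.kernel_prob)
    kernel_meas _ hA :=
      (Measure.measurable_coe hA).comp (h1.measurable.measure_bind h2.measurable)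
    admissible := h1.admissible_comp h2 habs
    dist A hA := by
      rw [Measure.lintegral_bind_apply h1.measurable h2.measurable hA, h1.bind_P, h2.bind_P]
    interv := h1.interv_comp h2 habs }
end

section
/- Existence of the pushforward causal space: in the setting of a surjective measurable map f and surjective ρ as above, if additionally K¹_{ρ⁻¹(S²)}(·, f⁻¹(A)) is measurable with respect to f⁻¹(ℋ²_{S²}) for all A ∈ ℋ² and all S² ⊆ T², then there exists a (unique) causal space 𝒞²=(Ω²,ℋ²,f_*ℙ¹,𝕂²) such that (f,ρ): 𝒞¹→𝒞² is a causal transformation; the kernels K²_{S²} are obtained via the factorization lemma from K¹_{ρ⁻¹(S²)}(·,f⁻¹(·)), and 𝒞² satisfies both causal space axioms. -/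
open MeasureTheory

/-- Existence of the pushforward causal space.  Let `𝒞¹` be a causal space,
`f : Ω¹ → Ω²` measurable and surjective, `ρ : T¹ → T²` surjective, `(f, ρ)` admissible with
respect to a family `H2` of sub-σ-algebras on `Ω²`, and suppose `K¹_{ρ⁻¹(S²)}(·, f⁻¹(A))` is
measurable with respect to `f⁻¹(ℋ²_{S²})` for all measurable `A` and all `S² ⊆ T²`.  Then
there exists a causal space `𝒞² = (Ω², ℋ², f_*ℙ¹, 𝕂²)` such that `(f, ρ) : 𝒞¹ → 𝒞²` is a
causal transformation, with kernels obtained by factorization; and it is unique. -/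
theorem existence_of_pushforward_causal_space {T1 T2 Ω1 Ω2 : Type*}
    [mΩ2 : MeasurableSpace Ω1] [MeasurableSpace Ω2]
    (C1 : CausalSpace T1 Ω1)
    (H2 : Set T2 → MeasurableSpace Ω2)
    (hH2_le : ∀ S, H2 S ≤ ‹MeasurableSpace Ω2›)
    (hH2_empty : H2 ∅ = ⊥) (hH2_univ : H2 Set.univ = ‹MeasurableSpace Ω2›)
    (hH2_mono : ∀ {S U : Set T2}, S ⊆ U → H2 S ≤ H2 U)
    (f : Ω1 → Ω2) (ρ : T1 → T2)
    (hf : Measurable f) (hfsurj : Function.Surjective f) (hρsurj : Function.Surjective ρ)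
    -- admissibility of the deterministic pair (f, ρ)
    (hadm : ∀ S : Set T2, ∀ A : Set Ω2, MeasurableSet[H2 S] A →
      MeasurableSet[C1.H (ρ ⁻¹' S)] (f ⁻¹' A))
    -- measurability of the domain kernels with respect to f⁻¹(ℋ²_{S²})
    (hfact : ∀ S : Set T2, ∀ A : Set Ω2, MeasurableSet A →
      Measurable[MeasurableSpace.comap f (H2 S)] fun ω => C1.K (ρ ⁻¹' S) ω (f ⁻¹' A)) :
    ∃ C2 : CausalSpace T2 Ω2,
      C2.H = H2 ∧
      C2.P = Measure.map f C1.P ∧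
      (∀ S : Set T2, ∀ A : Set Ω2, MeasurableSet A → ∀ ω : Ω1,
        C2.K S (f ω) A = C1.K (ρ ⁻¹' S) ω (f ⁻¹' A)) ∧
      -- uniqueness
      (∀ C2' : CausalSpace T2 Ω2,
        C2'.H = H2 →
        C2'.P = Measure.map f C1.P →
        (∀ S : Set T2, ∀ A : Set Ω2, MeasurableSet A → ∀ ω : Ω1,
          C2'.K S (f ω) A = C1.K (ρ ⁻¹' S) ω (f ⁻¹' A)) →
        C2'.P = C2.P ∧ ∀ S ω, C2'.K S ω = C2.K S ω) := by
  classical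
  set σf := Function.surjInv hfsurj with hσf
  have hσ : ∀ ω2, f (σf ω2) = ω2 := Function.surjInv_eq hfsurj
  -- constancy on fibers of f
  have const : ∀ (S : Set T2) (A : Set Ω2), MeasurableSet A → ∀ ω ω' : Ω1,
      f ω = f ω' → C1.K (ρ ⁻¹' S) ω (f ⁻¹' A) = C1.K (ρ ⁻¹' S) ω' (f ⁻¹' A) := by
    intro S A hA ω ω' hωω'
    have hmeas := hfact S A hA
    have hset : MeasurableSet[MeasurableSpace.comap f (H2 S)]
        ((fun ω => C1.K (ρ ⁻¹' S) ω (f ⁻¹' A)) ⁻¹' {C1.K (ρ ⁻¹' S) ω (f ⁻¹' A)}) :=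
      hmeas (measurableSet_singleton _)
    obtain ⟨C, -, hCeq⟩ := hset
    have hωmem : ω ∈ f ⁻¹' C := by
      rw [hCeq]; exact rfl
    have hω'mem : ω' ∈ f ⁻¹' C := by
      simp only [Set.mem_preimage] at hωmem ⊢
      rwa [← hωω']
    rw [hCeq] at hω'mem
    exact hω'mem.symm
  set K2 : Set T2 → Ω2 → Measure Ω2 :=
    fun S ω2 => (C1.K (ρ ⁻¹' S) (σf ω2)).map f with hK2
  have hK2app : ∀ (S : Set T2) (ω2 : Ω2) (A : Set Ω2), MeasurableSet A →
      K2 S ω2 A = C1.K (ρ ⁻¹' S) (σf ω2) (f ⁻¹' A) := by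
    intro S ω2 A hA
    exact Measure.map_apply hf hA
  have key : ∀ (S : Set T2) (A : Set Ω2), MeasurableSet A → ∀ ω1 : Ω1,
      K2 S (f ω1) A = C1.K (ρ ⁻¹' S) ω1 (f ⁻¹' A) := by
    intro S A hA ω1
    rw [hK2app S (f ω1) A hA]
    exact const S A hA (σf (f ω1)) ω1 (hσ (f ω1))
  refine ⟨{
      H := H2, H_le := hH2_le, H_empty := hH2_empty, H_univ := hH2_univ,
      H_mono := hH2_mono,
      P := Measure.map f C1.P,
      P_prob := by
        have := C1.P_prob
        exact Measure.isProbabilityMeasure_map hf.aemeasurable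
      K := K2,
      K_prob := by
        intro S ω
        have := C1.K_prob (ρ ⁻¹' S) (σf ω)
        exact Measure.isProbabilityMeasure_map hf.aemeasurable
      K_meas := by
        intro S A hA
        intro E hE
        obtain ⟨C, hC, hCeq⟩ := hfact S A hA hE
        suffices h : (fun ω2 => K2 S ω2 A) ⁻¹' E = C by rw [h]; exact hC
        ext ω2
        have h1 : ω2 ∈ (fun ω2 => K2 S ω2 A) ⁻¹' E ↔
            C1.K (ρ ⁻¹' S) (σf ω2) (f ⁻¹' A) ∈ E := by
          simp only [Set.mem_preimage, hK2app S ω2 A hA]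
        rw [h1]
        have h2 : C1.K (ρ ⁻¹' S) (σf ω2) (f ⁻¹' A) ∈ E ↔ σf ω2 ∈ f ⁻¹' C := by
          rw [hCeq]; exact Iff.rfl
        rw [h2, Set.mem_preimage, hσ ω2]
      K_empty := by
        intro ω2 A hA
        rw [hK2app ∅ ω2 A hA, Set.preimage_empty,
          C1.K_empty (σf ω2) (hf hA), Measure.map_apply hf hA]
      K_inter := by
        intro S ω2 A B hA hB
        have hA' : MeasurableSet A := hH2_le S A hA
        rw [hK2app S ω2 (A ∩ B) (hA'.inter hB), Set.preimage_inter,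
          C1.K_inter (ρ ⁻¹' S) (σf ω2) (hadm S A hA) (hf hB),
          hK2app S ω2 B hB]
        congr 1
        by_cases h : ω2 ∈ A
        · have : σf ω2 ∈ f ⁻¹' A := by rw [Set.mem_preimage, hσ]; exact h
          rw [Set.indicator_of_mem this, Set.indicator_of_mem h]
        · have : σf ω2 ∉ f ⁻¹' A := by rw [Set.mem_preimage, hσ]; exact h
          rw [Set.indicator_of_notMem this, Set.indicator_of_notMem h]
    }, rfl, rfl, ?_, ?_⟩
  · intro S A hA ω
    exact key S A hA ω
  · intro C2' h1 h2 h3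
    refine ⟨h2, ?_⟩
    intro S ω2
    show C2'.K S ω2 = K2 S ω2
    refine Measure.ext fun A hA => ?_
    have := h3 S A hA (σf ω2)
    rw [hσ ω2] at this
    rw [this, ← hK2app S ω2 A hA]
end

section
/- Perfect abstractions map intervened causal spaces to intervened causal spaces: let (f,ρ): 𝒞¹→𝒞² be a perfect abstraction, U¹=ρ⁻¹(U²) for U²⊆T², ℚ¹ a probability measure on (Ω¹,ℋ¹_{U¹}) and 𝕃¹ a causal mechanism on it with each L¹_{ρ⁻¹(S)}(·,A) measurable w.r.t. f⁻¹(ℋ²_S) for S⊆U². Set ℚ²=f_*ℚ¹ and let 𝕃² be the unique family with L²_S(f(ω),A)=L¹_{ρ⁻¹(S)}(ω,f⁻¹(A)). Then (f,ρ) is also a perfect abstraction from the intervened space (Ω¹,ℋ¹,(ℙ¹)^{do(U¹,ℚ¹)},(𝕂¹)^{do(U¹,ℚ¹,𝕃¹)}) to the intervened space (Ω²,ℋ²,(ℙ²)^{do(U²,ℚ²)},(𝕂²)^{do(U²,ℚ²,𝕃²)}); in particular f_*(ℙ¹)^{do(U¹,ℚ¹)} = (ℙ²)^{do(U²,ℚ²)}.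 -/
open MeasureTheory
open scoped Classical

/-- The sub-σ-algebra `ℋ_S` of the product σ-algebra on `∀ t, E t` generated by the
coordinates in `S`. -/
def piH {T : Type*} (E : T → Type*) [∀ t, MeasurableSpace (E t)] (S : Set T) :
    MeasurableSpace (∀ t, E t) :=
  ⨆ t ∈ S, MeasurableSpace.comap (fun ω => ω t) inferInstance

/-- A causal space on a product measurable space `(∀ t, E t, ⊗_t ℰ_t)`. -/
structure PiCausalSpace {T : Type*} (E : T → Type*) [∀ t, MeasurableSpace (E t)] where
  P : Measure (∀ t, E t)
  P_prob : IsProbabilityMeasure P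
  K : Set T → (∀ t, E t) → Measure (∀ t, E t)
  K_prob : ∀ S ω, IsProbabilityMeasure (K S ω)
  K_meas : ∀ (S : Set T) {A : Set (∀ t, E t)}, MeasurableSet A →
    Measurable[piH E S] fun ω => K S ω A
  K_empty : ∀ (ω : ∀ t, E t) {A : Set (∀ t, E t)}, MeasurableSet A → K ∅ ω A = P A
  K_inter : ∀ (S : Set T) (ω : ∀ t, E t) {A B : Set (∀ t, E t)},
    MeasurableSet[piH E S] A → MeasurableSet B →
    K S ω (A ∩ B) = A.indicator (fun _ => (1 : ENNReal)) ω * K S ω B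

/-!
Both identities reduce, after pushing the integrals forward along `f`, to pointwise
identities between the kernels of the two spaces.  The only non-trivial one is that
`K²_{S ∪ U}(·, A)` takes the same value at `U.piecewise (f ω') (f ω)` and at
`f ((ρ⁻¹ U).piecewise ω' ω)`: admissibility of `f` for `U` and for `Uᶜ` says that the
`U`-coordinates of `f x` only depend on the `ρ⁻¹ U`-coordinates of `x`, and the remaining
ones only on the remaining ones, as far as measurable functions can tell.
-/

section piH

variable {T : Type*} {E : T → Type*} [∀ t, MeasurableSpace (E t)]

lemma piH_eq_comap_domRestrict (S : Set T) :
    piH E S = MeasurableSpace.comap (S.domRestrict (π := E)) MeasurableSpace.pi := by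
  rw [MeasurableSpace.pi, MeasurableSpace.comap_iSup, piH, iSup_subtype']
  simp only [MeasurableSpace.comap_comp]
  rfl

lemma piH_le_pi (S : Set T) : piH E S ≤ MeasurableSpace.pi := by
  rw [piH_eq_comap_domRestrict]
  exact (Set.measurable_restrict S).comap_le

lemma measurable_piH_apply {S : Set T} {t : T} (ht : t ∈ S) :
    Measurable[piH E S] fun ω : ∀ t, E t => ω t := by
  rw [piH_eq_comap_domRestrict]
  exact (measurable_pi_apply (X := fun i : S => E i) ⟨t, ht⟩).comp (comap_measurable _)

lemma measurable_piecewise_left_piH (S : Set T) (y : ∀ t, E t) :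
    Measurable[piH E S, MeasurableSpace.pi] fun x : ∀ t, E t => S.piecewise x y := by
  refine @measurable_pi_lambda _ _ _ (piH E S) _ _ fun t => ?_
  by_cases ht : t ∈ S
  · simpa only [Set.piecewise_eq_of_mem _ _ _ ht] using measurable_piH_apply ht
  · simpa only [Set.piecewise_eq_of_notMem _ _ _ ht] using measurable_const

lemma measurable_piecewise_right_piH (S : Set T) (x : ∀ t, E t) :
    Measurable[piH E Sᶜ, MeasurableSpace.pi] fun y : ∀ t, E t => S.piecewise x y := by
  refine @measurable_pi_lambda _ _ _ (piH E Sᶜ) _ _ fun t => ?_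
  by_cases ht : t ∈ S
  · simpa only [Set.piecewise_eq_of_mem _ _ _ ht] using measurable_const
  · simpa only [Set.piecewise_eq_of_notMem _ _ _ ht] using measurable_piH_apply ht

lemma Measurable.piH_congr {β : Type*} [MeasurableSpace β] [MeasurableSingletonClass β]
    {S : Set T} {φ : (∀ t, E t) → β} (hφ : Measurable[piH E S] φ) {x y : ∀ t, E t}
    (hxy : ∀ t ∈ S, x t = y t) : φ x = φ y := by
  rw [piH_eq_comap_domRestrict] at hφ
  obtain ⟨B, -, hB⟩ := MeasurableSpace.measurableSet_comap.mp (hφ (measurableSet_singleton (φ y)))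
  have hrestrict : S.domRestrict x = S.domRestrict y := funext fun t => hxy t t.2
  have hy : y ∈ φ ⁻¹' {φ y} := rfl
  show x ∈ φ ⁻¹' {φ y}
  rw [← hB] at hy ⊢
  simpa only [Set.mem_preimage, hrestrict] using hy

end piH

section Admissible

variable {T1 T2 : Type*} {E1 : T1 → Type*} {E2 : T2 → Type*}
  [∀ t, MeasurableSpace (E1 t)] [∀ t, MeasurableSpace (E2 t)]

def IsAdmissible (f : (∀ t, E1 t) → ∀ t, E2 t) (ρ : T1 → T2) : Prop :=
  ∀ S : Set T2, Measurable[piH E1 (ρ ⁻¹' S), piH E2 S] f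

lemma IsAdmissible.apply_piecewise {f : (∀ t, E1 t) → ∀ t, E2 t} {ρ : T1 → T2}
    (hadm : IsAdmissible f ρ) {β : Type*} [MeasurableSpace β] [MeasurableSingletonClass β]
    {φ : (∀ t, E2 t) → β} (hφ : Measurable φ) (U : Set T2) (x y : ∀ t, E1 t) :
    φ (U.piecewise (f x) (f y)) = φ (f ((ρ ⁻¹' U).piecewise x y)) := by
  set c := (ρ ⁻¹' U).piecewise x y
  have hφU : Measurable[piH E2 U] fun z => φ (U.piecewise z (f y)) :=
    hφ.comp (measurable_piecewise_left_piH U (f y))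
  have hφUc : Measurable[piH E2 Uᶜ] fun z => φ (U.piecewise (f c) z) :=
    hφ.comp (measurable_piecewise_right_piH U (f c))
  have hleft : φ (U.piecewise (f x) (f y)) = φ (U.piecewise (f c) (f y)) :=
    Measurable.piH_congr (φ := fun z => φ (U.piecewise (f z) (f y))) (hφU.comp (hadm U))
      fun t ht => (Set.piecewise_eq_of_mem _ _ _ ht).symm
  have hright : φ (U.piecewise (f c) (f y)) = φ (U.piecewise (f c) (f c)) :=
    Measurable.piH_congr (φ := fun z => φ (U.piecewise (f c) (f z))) (hφUc.comp (hadm Uᶜ))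
      fun t ht => (Set.piecewise_eq_of_notMem (ρ ⁻¹' U) x y ht).symm
  rw [hleft, hright, Set.piecewise_same]

end Admissible

theorem perfect_abstraction_of_intervened_spaces_general
    {T1 T2 : Type*} (E1 : T1 → Type*) (E2 : T2 → Type*)
    [∀ t, MeasurableSpace (E1 t)] [∀ t, MeasurableSpace (E2 t)]
    (C1 : PiCausalSpace E1) (C2 : PiCausalSpace E2)
    (f : (∀ t, E1 t) → (∀ t, E2 t)) (ρ : T1 → T2)
    (hf : Measurable f)
    (hadm : ∀ S : Set T2, ∀ A : Set (∀ t, E2 t), MeasurableSet[piH E2 S] A →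
      MeasurableSet[piH E1 (ρ ⁻¹' S)] (f ⁻¹' A))
    (hint : ∀ S : Set T2, ∀ A : Set (∀ t, E2 t), MeasurableSet A → ∀ ω,
      C2.K S (f ω) A = C1.K (ρ ⁻¹' S) ω (f ⁻¹' A))
    (U2 : Set T2)
    (Q1 : @Measure (∀ t, E1 t) (piH E1 (ρ ⁻¹' U2)))
    (Q2 : @Measure (∀ t, E2 t) (piH E2 U2))
    (hQ2 : Q2 = @Measure.map _ _ (piH E1 (ρ ⁻¹' U2)) (piH E2 U2) f Q1)
    (L1 : Set T1 → (∀ t, E1 t) → Measure (∀ t, E1 t))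
    (L2 : Set T2 → (∀ t, E2 t) → Measure (∀ t, E2 t))
    (hL2 : ∀ S : Set T2, S ⊆ U2 → ∀ (ω) (A : Set (∀ t, E2 t)), MeasurableSet A →
      L2 S (f ω) A = L1 (ρ ⁻¹' S) ω (f ⁻¹' A)) :
    -- distributional consistency of the intervened spaces: f_*(ℙ¹)^{do} = (ℙ²)^{do}
    (∀ A : Set (∀ t, E2 t), MeasurableSet A →
      ∫⁻ ω, C2.K U2 ω A ∂Q2 = ∫⁻ ω, C1.K (ρ ⁻¹' U2) ω (f ⁻¹' A) ∂Q1) ∧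
    -- interventional consistency of the intervened causal mechanisms:
    -- (K²)^{do}_S(f(ω), A) = (K¹)^{do}_{ρ⁻¹(S)}(ω, f⁻¹(A))
    (∀ S : Set T2, ∀ A : Set (∀ t, E2 t), MeasurableSet A → ∀ ω : ∀ t, E1 t,
      ∫⁻ ω', C2.K (S ∪ U2) (U2.piecewise ω' (f ω)) A ∂(L2 (S ∩ U2) (f ω))
        = ∫⁻ ω', C1.K (ρ ⁻¹' S ∪ ρ ⁻¹' U2) ((ρ ⁻¹' U2).piecewise ω' ω) (f ⁻¹' A)
            ∂(L1 (ρ ⁻¹' S ∩ ρ ⁻¹' U2) ω)) := by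
  have hf_adm : IsAdmissible f ρ := hadm
  refine ⟨fun A hA => ?_, fun S A hA ω => ?_⟩
  · rw [hQ2, @lintegral_map _ _ (piH E1 (ρ ⁻¹' U2)) (piH E2 U2) _ _ _ (C2.K_meas U2 hA) (hf_adm U2)]
    exact lintegral_congr fun ω => hint U2 A hA ω
  · have hL2_eq_map : L2 (S ∩ U2) (f ω) = (L1 (ρ ⁻¹' S ∩ ρ ⁻¹' U2) ω).map f :=
      Measure.ext fun B hB => by
        rw [Measure.map_apply hf hB, hL2 _ Set.inter_subset_right ω B hB, Set.preimage_inter]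
    have hK2 : Measurable fun z => C2.K (S ∪ U2) z A :=
      (C2.K_meas (S ∪ U2) hA).mono (piH_le_pi _) le_rfl
    have hK2_piecewise : Measurable fun ω' => C2.K (S ∪ U2) (U2.piecewise ω' (f ω)) A :=
      hK2.comp ((measurable_piecewise_left_piH U2 (f ω)).mono (piH_le_pi U2) le_rfl)
    rw [hL2_eq_map, lintegral_map hK2_piecewise hf]
    refine lintegral_congr fun ω' => ?_
    rw [hf_adm.apply_piecewise hK2, hint _ A hA, Set.preimage_union]

/-- Perfect abstractions map intervened causal spaces to intervened causal
spaces.  Let `(f, ρ) : 𝒞¹ → 𝒞²` be a perfect abstraction (`f`, `ρ` surjective, `f`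
measurable, `f_*ℙ¹ = ℙ²`, `K²_S(f(ω), A) = K¹_{ρ⁻¹(S)}(ω, f⁻¹(A))`, admissible), let
`U¹ = ρ⁻¹(U²)`, `ℚ¹` a probability measure on `(Ω¹, ℋ¹_{U¹})`, `𝕃¹` a causal mechanism with
`L¹_{ρ⁻¹(S)}(·, A)` measurable w.r.t. `f⁻¹(ℋ²_S)` for `S ⊆ U²`, `ℚ² = f_*ℚ¹` and `𝕃²` the
unique family with `L²_S(f(ω), A) = L¹_{ρ⁻¹(S)}(ω, f⁻¹(A))`.  Then `(f, ρ)` is a perfect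
abstraction between the intervened spaces: in particular the intervention measures satisfy
`f_*(ℙ¹)^{do(U¹,ℚ¹)} = (ℙ²)^{do(U²,ℚ²)}` and the intervention causal kernels
`K^{do}_S(ω, A) = ∫ L_{S∩U}(ω, dω'_U) K_{S∪U}((ω_{S∖U}, ω'_U), A)` satisfy interventional
consistency along `f`. -/
theorem perfect_abstraction_of_intervened_spaces
    {T1 T2 : Type*} (E1 : T1 → Type*) (E2 : T2 → Type*)
    [∀ t, MeasurableSpace (E1 t)] [∀ t, MeasurableSpace (E2 t)]
    (C1 : PiCausalSpace E1) (C2 : PiCausalSpace E2)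
    (f : (∀ t, E1 t) → (∀ t, E2 t)) (ρ : T1 → T2)
    (hf : Measurable f) (hfsurj : Function.Surjective f) (hρsurj : Function.Surjective ρ)
    (hadm : ∀ S : Set T2, ∀ A : Set (∀ t, E2 t), MeasurableSet[piH E2 S] A →
      MeasurableSet[piH E1 (ρ ⁻¹' S)] (f ⁻¹' A))
    (hdist : Measure.map f C1.P = C2.P)
    (hint : ∀ S : Set T2, ∀ A : Set (∀ t, E2 t), MeasurableSet A → ∀ ω,
      C2.K S (f ω) A = C1.K (ρ ⁻¹' S) ω (f ⁻¹' A))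
    (U2 : Set T2)
    (Q1 : @Measure (∀ t, E1 t) (piH E1 (ρ ⁻¹' U2)))
    (hQ1 : @IsProbabilityMeasure _ (piH E1 (ρ ⁻¹' U2)) Q1)
    (Q2 : @Measure (∀ t, E2 t) (piH E2 U2))
    (hQ2 : Q2 = @Measure.map _ _ (piH E1 (ρ ⁻¹' U2)) (piH E2 U2) f Q1)
    (L1 : Set T1 → (∀ t, E1 t) → Measure (∀ t, E1 t))
    (hL1prob : ∀ S ω, IsProbabilityMeasure (L1 S ω))
    (hL1meas : ∀ S : Set T2, S ⊆ U2 → ∀ A : Set (∀ t, E1 t), MeasurableSet A →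
      Measurable[MeasurableSpace.comap f (piH E2 S)] fun ω => L1 (ρ ⁻¹' S) ω A)
    (L2 : Set T2 → (∀ t, E2 t) → Measure (∀ t, E2 t))
    (hL2 : ∀ S : Set T2, S ⊆ U2 → ∀ (ω) (A : Set (∀ t, E2 t)), MeasurableSet A →
      L2 S (f ω) A = L1 (ρ ⁻¹' S) ω (f ⁻¹' A)) :
    -- distributional consistency of the intervened spaces: f_*(ℙ¹)^{do} = (ℙ²)^{do}
    (∀ A : Set (∀ t, E2 t), MeasurableSet A →
      ∫⁻ ω, C2.K U2 ω A ∂Q2 = ∫⁻ ω, C1.K (ρ ⁻¹' U2) ω (f ⁻¹' A) ∂Q1) ∧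
    -- interventional consistency of the intervened causal mechanisms:
    -- (K²)^{do}_S(f(ω), A) = (K¹)^{do}_{ρ⁻¹(S)}(ω, f⁻¹(A))
    (∀ S : Set T2, ∀ A : Set (∀ t, E2 t), MeasurableSet A → ∀ ω : ∀ t, E1 t,
      ∫⁻ ω', C2.K (S ∪ U2) (U2.piecewise ω' (f ω)) A ∂(L2 (S ∩ U2) (f ω))
        = ∫⁻ ω', C1.K (ρ ⁻¹' S ∪ ρ ⁻¹' U2) ((ρ ⁻¹' U2).piecewise ω' ω) (f ⁻¹' A)
            ∂(L1 (ρ ⁻¹' S ∩ ρ ⁻¹' U2) ω)) :=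
  perfect_abstraction_of_intervened_spaces_general E1 E2 C1 C2 f ρ hf hadm hint U2 Q1 Q2 hQ2 L1 L2
    hL2
end

section
/- Perfect abstractions preserve absence of causal effect: let (f,ρ): 𝒞¹→𝒞² be a perfect abstraction, U²,V² ⊆ T², U¹=ρ⁻¹(U²), V¹=ρ⁻¹(V²). If ℋ¹_{U¹} has no causal effect on ℋ¹_{V¹} in 𝒞¹ (i.e. K¹_S(ω,B)=K¹_{S∖U¹}(ω,B) for all S⊆T¹, ω∈Ω¹, B∈ℋ¹_{V¹}), then ℋ²_{U²} has no causal effect on ℋ²_{V²} in 𝒞² (i.e. K²_{S²}(ω',A)=K²_{S²∖U²}(ω',A) for all S²⊆T², ω'∈Ω², A∈ℋ²_{V²}). -/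
open MeasureTheory

/-- Perfect abstractions preserve absence of causal effect.  Let
`(f, ρ) : 𝒞¹ → 𝒞²` be a perfect abstraction (`f`, `ρ` surjective, `f` measurable,
`f_*ℙ¹ = ℙ²`, admissible, with `K²_S(f(ω), A) = K¹_{ρ⁻¹(S)}(ω, f⁻¹(A))`), `U², V² ⊆ T²`,
`U¹ = ρ⁻¹(U²)`, `V¹ = ρ⁻¹(V²)`.  If `ℋ¹_{U¹}` has no causal effect on `ℋ¹_{V¹}` in `𝒞¹`,
then `ℋ²_{U²}` has no causal effect on `ℋ²_{V²}` in `𝒞²`. -/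
theorem perfect_abstraction_no_causal_effect {T1 T2 Ω1 Ω2 : Type*}
    [MeasurableSpace Ω1] [MeasurableSpace Ω2]
    (C1 : CausalSpace T1 Ω1) (C2 : CausalSpace T2 Ω2)
    (f : Ω1 → Ω2) (ρ : T1 → T2)
    (hf : Measurable f) (hfsurj : Function.Surjective f) (hρsurj : Function.Surjective ρ)
    (hadm : ∀ S : Set T2, ∀ A : Set Ω2, MeasurableSet[C2.H S] A →
      MeasurableSet[C1.H (ρ ⁻¹' S)] (f ⁻¹' A))
    (hdist : Measure.map f C1.P = C2.P)
    (hint : ∀ S : Set T2, ∀ A : Set Ω2, MeasurableSet A → ∀ ω : Ω1,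
      C2.K S (f ω) A = C1.K (ρ ⁻¹' S) ω (f ⁻¹' A))
    (U2 V2 : Set T2)
    -- ℋ¹_{ρ⁻¹(U²)} has no causal effect on ℋ¹_{ρ⁻¹(V²)} in 𝒞¹
    (hnce : ∀ S : Set T1, ∀ ω : Ω1, ∀ B : Set Ω1, MeasurableSet[C1.H (ρ ⁻¹' V2)] B →
      C1.K S ω B = C1.K (S \ ρ ⁻¹' U2) ω B) :
    -- ℋ²_{U²} has no causal effect on ℋ²_{V²} in 𝒞²
    ∀ S2 : Set T2, ∀ ω' : Ω2, ∀ A : Set Ω2, MeasurableSet[C2.H V2] A →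
      C2.K S2 ω' A = C2.K (S2 \ U2) ω' A := by
  intro S2 ω' A hA
  obtain ⟨ω, rfl⟩ := hfsurj ω'
  have hAm : MeasurableSet A := C2.H_le V2 A hA
  rw [hint S2 A hAm ω, hint (S2 \ U2) A hAm ω,
    hnce (ρ ⁻¹' S2) ω (f ⁻¹' A) (hadm V2 A hA), Set.preimage_diff]
end

section
/- Perfect abstractions reflect active causal effects: let (f,ρ): 𝒞¹→𝒞² be a perfect abstraction, U²,V² ⊆ T², U¹=ρ⁻¹(U²), V¹=ρ⁻¹(V²). If ℋ²_{U²} has an active causal effect on ℋ²_{V²} in 𝒞² (i.e. there exist ω'∈Ω² and A∈ℋ²_{V²} with K²_{U²}(ω',A) ≠ ℙ²(A)), then ℋ¹_{U¹} has an active causal effect on ℋ¹_{V¹} in 𝒞¹ (i.e. there exist ω∈Ω¹ and B∈ℋ¹_{V¹} with K¹_{U¹}(ω,B) ≠ ℙ¹(B)). -/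
open MeasureTheory

/-- Perfect abstractions reflect active causal effects.  Let
`(f, ρ) : 𝒞¹ → 𝒞²` be a perfect abstraction, `U², V² ⊆ T²`, `U¹ = ρ⁻¹(U²)`,
`V¹ = ρ⁻¹(V²)`.  If `ℋ²_{U²}` has an active causal effect on `ℋ²_{V²}` in `𝒞²` (there are
`ω'` and `A ∈ ℋ²_{V²}` with `K²_{U²}(ω', A) ≠ ℙ²(A)`), then `ℋ¹_{U¹}` has an active causal
effect on `ℋ¹_{V¹}` in `𝒞¹`. -/
theorem perfect_abstraction_active_causal_effect {T1 T2 Ω1 Ω2 : Type*}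
    [MeasurableSpace Ω1] [MeasurableSpace Ω2]
    (C1 : CausalSpace T1 Ω1) (C2 : CausalSpace T2 Ω2)
    (f : Ω1 → Ω2) (ρ : T1 → T2)
    (hf : Measurable f) (hfsurj : Function.Surjective f) (hρsurj : Function.Surjective ρ)
    (hadm : ∀ S : Set T2, ∀ A : Set Ω2, MeasurableSet[C2.H S] A →
      MeasurableSet[C1.H (ρ ⁻¹' S)] (f ⁻¹' A))
    (hdist : Measure.map f C1.P = C2.P)
    (hint : ∀ S : Set T2, ∀ A : Set Ω2, MeasurableSet A → ∀ ω : Ω1,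
      C2.K S (f ω) A = C1.K (ρ ⁻¹' S) ω (f ⁻¹' A))
    (U2 V2 : Set T2)
    (hactive : ∃ (ω' : Ω2) (A : Set Ω2),
      MeasurableSet[C2.H V2] A ∧ C2.K U2 ω' A ≠ C2.P A) :
    ∃ (ω : Ω1) (B : Set Ω1),
      MeasurableSet[C1.H (ρ ⁻¹' V2)] B ∧ C1.K (ρ ⁻¹' U2) ω B ≠ C1.P B := by
  obtain ⟨ω', A, hA, hne⟩ := hactive
  obtain ⟨ω, rfl⟩ := hfsurj ω'
  have hAmeas : MeasurableSet A := C2.H_le V2 A hA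
  refine ⟨ω, f ⁻¹' A, hadm V2 A hA, ?_⟩
  rw [← hint U2 A hAmeas ω]
  have hP : C1.P (f ⁻¹' A) = C2.P A := by
    rw [← hdist, Measure.map_apply hf hAmeas]
  rw [hP]
  exact hne
end

section
/- Perfect abstractions preserve local sources: let (f,ρ): 𝒞¹→𝒞² be a perfect abstraction, U²,V² ⊆ T², U¹=ρ⁻¹(U²), V¹=ρ⁻¹(V²). If ℋ¹_{U¹} is a local source of ℋ¹_{V¹} in 𝒞¹, then ℋ²_{U²} is a local source of ℋ²_{V²} in 𝒞²; i.e. for every A ∈ ℋ²_{V²} and every B ∈ ℋ²_{U²}: ∫ℙ²(dω') 𝟙_A(ω')𝟙_B(ω') = ∫ℙ²(dω') 𝟙_B(ω') K²_{U²}(ω',A). Consequently, if ℋ¹_{U¹} is a global source of 𝒞¹ then ℋ²_{U²} is a global source of 𝒞². -/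
open MeasureTheory

/-- Perfect abstractions preserve local sources.  Let `(f, ρ) : 𝒞¹ → 𝒞²` be a
perfect abstraction, `U², V² ⊆ T²`, `U¹ = ρ⁻¹(U²)`, `V¹ = ρ⁻¹(V²)`.  If `ℋ¹_{U¹}` is a
local source of `ℋ¹_{V¹}` in `𝒞¹`, then `ℋ²_{U²}` is a local source of `ℋ²_{V²}` in `𝒞²`:
for every `A ∈ ℋ²_{V²}` and `B ∈ ℋ²_{U²}`, `∫_B K²_{U²}(ω', A) ℙ²(dω') = ℙ²(A ∩ B)`.
Consequently, if `ℋ¹_{U¹}` is a global source of `𝒞¹` then `ℋ²_{U²}` is a global source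
of `𝒞²`. -/
theorem perfect_abstraction_sources {T1 T2 Ω1 Ω2 : Type*}
    [MeasurableSpace Ω1] [MeasurableSpace Ω2]
    (C1 : CausalSpace T1 Ω1) (C2 : CausalSpace T2 Ω2)
    (f : Ω1 → Ω2) (ρ : T1 → T2)
    (hf : Measurable f) (hfsurj : Function.Surjective f) (hρsurj : Function.Surjective ρ)
    (hadm : ∀ S : Set T2, ∀ A : Set Ω2, MeasurableSet[C2.H S] A →
      MeasurableSet[C1.H (ρ ⁻¹' S)] (f ⁻¹' A))
    (hdist : Measure.map f C1.P = C2.P)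
    (hint : ∀ S : Set T2, ∀ A : Set Ω2, MeasurableSet A → ∀ ω : Ω1,
      C2.K S (f ω) A = C1.K (ρ ⁻¹' S) ω (f ⁻¹' A))
    (U2 V2 : Set T2)
    -- ℋ¹_{U¹} is a local source of ℋ¹_{V¹} in 𝒞¹
    (hsource : ∀ B1 : Set Ω1, MeasurableSet[C1.H (ρ ⁻¹' V2)] B1 →
      ∀ B : Set Ω1, MeasurableSet[C1.H (ρ ⁻¹' U2)] B →
      ∫⁻ ω in B, C1.K (ρ ⁻¹' U2) ω B1 ∂C1.P = C1.P (B1 ∩ B)) :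
    -- ℋ²_{U²} is a local source of ℋ²_{V²} in 𝒞²
    (∀ A : Set Ω2, MeasurableSet[C2.H V2] A →
      ∀ B : Set Ω2, MeasurableSet[C2.H U2] B →
      ∫⁻ ω' in B, C2.K U2 ω' A ∂C2.P = C2.P (A ∩ B)) ∧
    -- and if ℋ¹_{U¹} is a global source of 𝒞¹ then ℋ²_{U²} is a global source of 𝒞²
    ((∀ B1 : Set Ω1, MeasurableSet B1 →
        ∀ B : Set Ω1, MeasurableSet[C1.H (ρ ⁻¹' U2)] B →
        ∫⁻ ω in B, C1.K (ρ ⁻¹' U2) ω B1 ∂C1.P = C1.P (B1 ∩ B)) →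
      (∀ A : Set Ω2, MeasurableSet A →
        ∀ B : Set Ω2, MeasurableSet[C2.H U2] B →
        ∫⁻ ω' in B, C2.K U2 ω' A ∂C2.P = C2.P (A ∩ B))) := by
  have key : ∀ A : Set Ω2, MeasurableSet A →
      MeasurableSet[C1.H (ρ ⁻¹' V2)] (f ⁻¹' A) ∨ MeasurableSet (f ⁻¹' A) →
      ∀ B : Set Ω2, MeasurableSet[C2.H U2] B →
      (∀ B1 : Set Ω1,
        (MeasurableSet[C1.H (ρ ⁻¹' V2)] B1 ∨ MeasurableSet B1) → B1 = f ⁻¹' A →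
        ∀ B' : Set Ω1, MeasurableSet[C1.H (ρ ⁻¹' U2)] B' →
        ∫⁻ ω in B', C1.K (ρ ⁻¹' U2) ω B1 ∂C1.P = C1.P (B1 ∩ B')) →
      ∫⁻ ω' in B, C2.K U2 ω' A ∂C2.P = C2.P (A ∩ B) := by
    intro A hA _ B hB hsrc
    have hBamb : MeasurableSet B := C2.H_le U2 B hB
    have hfB : MeasurableSet[C1.H (ρ ⁻¹' U2)] (f ⁻¹' B) := hadm U2 B hB
    have hKmeas : Measurable fun ω' => C2.K U2 ω' A :=
      (C2.K_meas U2 hA).mono (C2.H_le U2) le_rfl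
    calc ∫⁻ ω' in B, C2.K U2 ω' A ∂C2.P
        = ∫⁻ ω' in B, C2.K U2 ω' A ∂(Measure.map f C1.P) := by rw [hdist]
      _ = ∫⁻ ω in f ⁻¹' B, C2.K U2 (f ω) A ∂C1.P :=
          setLIntegral_map hBamb hKmeas hf
      _ = ∫⁻ ω in f ⁻¹' B, C1.K (ρ ⁻¹' U2) ω (f ⁻¹' A) ∂C1.P := by
          refine lintegral_congr fun ω => ?_
          exact hint U2 A hA ω
      _ = C1.P (f ⁻¹' A ∩ f ⁻¹' B) := by
          refine hsrc (f ⁻¹' A) ?_ rfl (f ⁻¹' B) hfB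
          right; exact hf hA
      _ = C1.P (f ⁻¹' (A ∩ B)) := by rw [Set.preimage_inter]
      _ = (Measure.map f C1.P) (A ∩ B) := by
          rw [Measure.map_apply hf (hA.inter hBamb)]
      _ = C2.P (A ∩ B) := by rw [hdist]
  constructor
  · intro A hA B hB
    have hAamb : MeasurableSet A := C2.H_le V2 A hA
    refine key A hAamb (Or.inl (hadm V2 A hA)) B hB ?_
    intro B1 _ hB1eq B' hB'
    subst hB1eq
    exact hsource (f ⁻¹' A) (hadm V2 A hA) B' hB'
  · intro hglobal A hA B hB
    refine key A hA (Or.inr (hf hA)) B hB ?_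
    intro B1 _ hB1eq B' hB'
    subst hB1eq
    exact hglobal (f ⁻¹' A) (hf hA) B' hB'
end

section
/- Inclusion of SCM marginals is a causal transformation: for an acyclic SCM on variables (X₁,…,X_d) with observational law ℙ on ℝ^d and S ⊆ [d], let 𝒞¹=(ℝ^{|S|}, ℬ(ℝ^{|S|}), ℙ^S, 𝕂) with ℙ^S the marginal on coordinates in S, and 𝒞²=(ℝ^d, ℬ(ℝ^d), ℙ, 𝕃) the full space, where 𝕂 is the marginalization of 𝕃 in the sense that K_{S'}(ω,A)=L_{S'}(ω,A) for all S'⊆S, ω, A∈ℬ(ℝ^{|S|}) (viewed inside ℬ(ℝ^d)). Define ρ: S ↪ [d] the inclusion and κ(ω,A) = ℙ_{ℋ¹}(ω,A), the conditional probability of A given the coordinates in S. Then (κ,ρ): 𝒞¹→𝒞² is a causal transformation: it is admissible, ∫κ(ω,A)ℙ^S(dω)=ℙ(A), and ∫K_{S'}(ω,dω')κ(ω',A) = ∫κ(ω,dω')L_{S'}(ω',A) for all S'⊆S, ω, A∈ℋ¹. -/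
/-!
Since `κ(ω, ·)` gives `r⁻¹' A` mass `𝟙_A(ω)`, its push-forward along the restriction `r` is the
Dirac mass at `ω`. Admissibility follows because an `ℋ¹`-event depending only on the coordinates
in `S' ⊆ S` is `r⁻¹' B` with `B` depending only on the coordinates in `S'`, so `κ(·, r⁻¹' B)` is
the indicator of `B`. For interventional consistency, an `ℋ¹`-measurable `L_{S'}(·, r⁻¹' A)`
factors as `g ∘ r`, so both sides equal `g(ω)`: the left one because `K_{S'}` is the
marginalization of `L_{S'}`, the right one by the Dirac property.
-/

open MeasureTheory

lemma piH_eq_cylinderEvents {T : Type*} (E : T → Type*) [∀ t, MeasurableSpace (E t)]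
    (S : Set T) : piH E S = cylinderEvents S :=
  rfl

namespace MeasureTheory

section cylinderEvents

variable {ι : Type*} {X : ι → Type*} [∀ i, MeasurableSpace (X i)]

lemma cylinderEvents_eq_comap_domRestrict {Δ Δ' : Set ι} (h : Δ' ⊆ Δ) :
    cylinderEvents (X := X) Δ' =
      (cylinderEvents (X := fun i : Δ => X i) (Subtype.val ⁻¹' Δ')).comap Δ.domRestrict := by
  simp only [cylinderEvents, MeasurableSpace.comap_iSup, MeasurableSpace.comap_comp]
  refine le_antisymm (iSup₂_le fun i hi => ?_) (iSup₂_le fun i hi => le_iSup₂_of_le i.1 hi le_rfl)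
  exact le_iSup₂_of_le (⟨i, h hi⟩ : Δ) hi le_rfl

lemma cylinderEvents_eq_comap_domRestrict_self (Δ : Set ι) :
    cylinderEvents (X := X) Δ = MeasurableSpace.pi.comap Δ.domRestrict := by
  rw [cylinderEvents_eq_comap_domRestrict subset_rfl, Subtype.coe_preimage_self,
    cylinderEvents_univ]

end cylinderEvents

section PreimageIndicator

variable {α β : Type*} [MeasurableSpace α] [mβ : MeasurableSpace β] {r : α → β}

lemma Measure.map_eq_dirac_of_preimage_eq_indicator {μ : Measure α} {b : β} (hr : Measurable r)
    (hμ : ∀ B, MeasurableSet B → μ (r ⁻¹' B) = B.indicator (fun _ => 1) b) :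
    μ.map r = Measure.dirac b :=
  Measure.ext fun B hB => by rw [Measure.map_apply hr hB, hμ B hB, Measure.dirac_apply' b hB]; rfl

lemma lintegral_comp_eq_of_preimage_eq_indicator {μ : Measure α} {b : β} (hr : Measurable r)
    (hμ : ∀ B, MeasurableSet B → μ (r ⁻¹' B) = B.indicator (fun _ => 1) b)
    {g : β → ENNReal} (hg : Measurable g) : ∫⁻ a, g (r a) ∂μ = g b := by
  rw [← lintegral_map hg hr, Measure.map_eq_dirac_of_preimage_eq_indicator hr hμ,
    lintegral_dirac' b hg]

lemma measurable_measure_apply_of_preimage_eq_indicator {m : MeasurableSpace β} (hm : m ≤ mβ)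
    {κ : β → Measure α}
    (hκ : ∀ B, MeasurableSet[mβ] B → ∀ b, κ b (r ⁻¹' B) = B.indicator (fun _ => 1) b)
    {A : Set α} (hA : MeasurableSet[m.comap r] A) : Measurable[m] fun b => κ b A := by
  obtain ⟨B, hB, rfl⟩ := hA
  simp_rw [hκ B (hm B hB)]
  exact measurable_const.indicator hB

end PreimageIndicator

end MeasureTheory

theorem inclusion_of_scm_marginal_is_causal_transformation_general
    {d : ℕ} (S : Set (Fin d))
    (P : Measure (Fin d → ℝ))
    (r : (Fin d → ℝ) → (S → ℝ)) (hr : r = fun ω i => ω i)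
    (K : Set (Fin d) → (S → ℝ) → Measure (S → ℝ))
    (L : Set (Fin d) → (Fin d → ℝ) → Measure (Fin d → ℝ))
    (κ : (S → ℝ) → Measure (Fin d → ℝ))
    -- κ is a regular conditional probability of ℙ given ℋ¹ = σ(coordinates in S)
    (hκcond : ∀ A : Set (Fin d → ℝ), MeasurableSet A →
      ∀ B : Set (S → ℝ), MeasurableSet B →
      ∫⁻ ω in B, κ ω A ∂(Measure.map r P) = P (A ∩ r ⁻¹' B))
    -- pointwise-proper version: κ(ω, A) = 𝟙_A(ω) for A ∈ ℋ¹
    (hκpoint : ∀ A : Set (S → ℝ), MeasurableSet A → ∀ ω : S → ℝ,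
      κ ω (r ⁻¹' A) = A.indicator (fun _ => (1 : ENNReal)) ω)
    -- L_{S'}(·, A) is ℋ¹-measurable for S' ⊆ S and A ∈ ℋ¹
    (hLmeas : ∀ S' : Set (Fin d), S' ⊆ S → ∀ A : Set (S → ℝ), MeasurableSet A →
      Measurable[piH (fun _ : Fin d => ℝ) S] fun ω => L S' ω (r ⁻¹' A))
    -- 𝕂 is the marginalization of 𝕃
    (hmarg : ∀ S' : Set (Fin d), S' ⊆ S → ∀ (ω : Fin d → ℝ) (A : Set (S → ℝ)),
      MeasurableSet A → K S' (r ω) A = L S' ω (r ⁻¹' A)) :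
    -- admissibility
    (∀ S' : Set (Fin d), S' ⊆ S → ∀ A : Set (Fin d → ℝ),
      MeasurableSet[piH (fun _ : Fin d => ℝ) S'] A →
      Measurable[piH (fun _ : S => ℝ) (Subtype.val ⁻¹' S')] fun ω => κ ω A) ∧
    -- distributional consistency: ∫ κ(ω, A) ℙ^S(dω) = ℙ(A)
    (∀ A : Set (Fin d → ℝ), MeasurableSet A →
      ∫⁻ ω, κ ω A ∂(Measure.map r P) = P A) ∧
    -- interventional consistency
    (∀ S' : Set (Fin d), S' ⊆ S → ∀ A : Set (S → ℝ), MeasurableSet A → ∀ ω : S → ℝ,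
      ∫⁻ ω', κ ω' (r ⁻¹' A) ∂(K S' ω)
        = ∫⁻ ω₂, L S' ω₂ (r ⁻¹' A) ∂(κ ω)) := by
  obtain rfl : r = S.domRestrict := hr
  refine ⟨fun S' hS' A hA => ?_, fun A hA => ?_, fun S' hS' A hA ω => ?_⟩
  · rw [piH_eq_cylinderEvents, cylinderEvents_eq_comap_domRestrict hS'] at hA
    exact measurable_measure_apply_of_preimage_eq_indicator cylinderEvents_le_pi hκpoint hA
  · simpa using hκcond A hA Set.univ MeasurableSet.univ
  · have hL := hLmeas S' hS' A hA
    rw [piH_eq_cylinderEvents, cylinderEvents_eq_comap_domRestrict_self] at hL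
    obtain ⟨g, hg, hLg⟩ := hL.exists_eq_measurable_comp
    obtain ⟨x, rfl⟩ := Subtype.surjective_restrict (β := fun _ => ℝ) (· ∈ S) ω
    calc ∫⁻ ω', κ ω' (S.domRestrict ⁻¹' A) ∂(K S' (S.domRestrict x))
        = K S' (S.domRestrict x) A := by
          simp_rw [hκpoint A hA]; exact lintegral_indicator_one hA
      _ = g (S.domRestrict x) := by rw [hmarg S' hS' x A hA]; exact congrFun hLg x
      _ = ∫⁻ ω₂, g (S.domRestrict ω₂) ∂(κ (S.domRestrict x)) :=
          (lintegral_comp_eq_of_preimage_eq_indicator (S.measurable_restrict (X := fun _ => ℝ))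
            (fun B hB => hκpoint B hB _) hg).symm
      _ = ∫⁻ ω₂, L S' ω₂ (S.domRestrict ⁻¹' A) ∂(κ (S.domRestrict x)) := by rw [hLg]; rfl

/-- Inclusion of SCM marginals is a causal transformation.  For an acyclic SCM
on `(X₁, …, X_d)` with observational law `ℙ` on `ℝ^d` and `S ⊆ [d]`, let `𝒞¹` be the causal
space on `ℝ^{|S|}` with the marginal `ℙ^S = r_*ℙ` (`r` the restriction to the coordinates in
`S`) and causal mechanism `𝕂` the marginalization of the mechanism `𝕃` of the full space
`𝒞²` (`K_{S'}(r(ω), A) = L_{S'}(ω, r⁻¹(A))` for `S' ⊆ S`), and let `κ(·, A) = ℙ_{ℋ¹}(A)` be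
(a pointwise-proper version of) the conditional probability of `ℙ` given the coordinates in
`S`, with `L_{S'}(·, A)` being `ℋ¹`-measurable for `A ∈ ℋ¹`.  Then `(κ, ρ)` with
`ρ : S ↪ [d]` the inclusion is a causal transformation `𝒞¹ → 𝒞²`: it is admissible,
distributionally consistent, and interventionally consistent. -/
theorem inclusion_of_scm_marginal_is_causal_transformation
    {d : ℕ} (S : Set (Fin d))
    (P : Measure (Fin d → ℝ)) (hPprob : IsProbabilityMeasure P)
    (r : (Fin d → ℝ) → (S → ℝ)) (hr : r = fun ω i => ω i)
    (K : Set (Fin d) → (S → ℝ) → Measure (S → ℝ))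
    (L : Set (Fin d) → (Fin d → ℝ) → Measure (Fin d → ℝ))
    (κ : (S → ℝ) → Measure (Fin d → ℝ))
    (hκprob : ∀ ω, IsProbabilityMeasure (κ ω))
    -- κ is a regular conditional probability of ℙ given ℋ¹ = σ(coordinates in S)
    (hκcond : ∀ A : Set (Fin d → ℝ), MeasurableSet A →
      ∀ B : Set (S → ℝ), MeasurableSet B →
      ∫⁻ ω in B, κ ω A ∂(Measure.map r P) = P (A ∩ r ⁻¹' B))
    -- pointwise-proper version: κ(ω, A) = 𝟙_A(ω) for A ∈ ℋ¹
    (hκpoint : ∀ A : Set (S → ℝ), MeasurableSet A → ∀ ω : S → ℝ,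
      κ ω (r ⁻¹' A) = A.indicator (fun _ => (1 : ENNReal)) ω)
    -- L_{S'}(·, A) is ℋ¹-measurable for S' ⊆ S and A ∈ ℋ¹
    (hLmeas : ∀ S' : Set (Fin d), S' ⊆ S → ∀ A : Set (S → ℝ), MeasurableSet A →
      Measurable[piH (fun _ : Fin d => ℝ) S] fun ω => L S' ω (r ⁻¹' A))
    -- 𝕂 is the marginalization of 𝕃
    (hmarg : ∀ S' : Set (Fin d), S' ⊆ S → ∀ (ω : Fin d → ℝ) (A : Set (S → ℝ)),
      MeasurableSet A → K S' (r ω) A = L S' ω (r ⁻¹' A)) :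
    -- admissibility
    (∀ S' : Set (Fin d), S' ⊆ S → ∀ A : Set (Fin d → ℝ),
      MeasurableSet[piH (fun _ : Fin d => ℝ) S'] A →
      Measurable[piH (fun _ : S => ℝ) (Subtype.val ⁻¹' S')] fun ω => κ ω A) ∧
    -- distributional consistency: ∫ κ(ω, A) ℙ^S(dω) = ℙ(A)
    (∀ A : Set (Fin d → ℝ), MeasurableSet A →
      ∫⁻ ω, κ ω A ∂(Measure.map r P) = P A) ∧
    -- interventional consistency
    (∀ S' : Set (Fin d), S' ⊆ S → ∀ A : Set (S → ℝ), MeasurableSet A → ∀ ω : S → ℝ,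
      ∫⁻ ω', κ ω' (r ⁻¹' A) ∂(K S' ω)
        = ∫⁻ ω₂, L S' ω₂ (r ⁻¹' A) ∂(κ ω)) :=
  inclusion_of_scm_marginal_is_causal_transformation_general S P r hr K L κ hκcond hκpoint hLmeas
    hmarg
end

section
/- Failure of composition without the abstraction hypothesis: in the Gaussian SCM X₁=N₁, X₂=N₂, Y=X₁+X₂+N_Y (independent standard normals), the conditional law of X₂ given X₁=x₁, Y=y is N((y−x₁)/2, 1/2). Consequently, composing the inclusion kernel κ₁((x₁,y),·)=δ_{x₁}⊗N((y−x₁)/2,1/2)⊗δ_y (from the (X₁,Y)-space into the (X₁,X₂,Y)-space) with the abstraction kernel κ₂((x₁,x₂,y),·)=δ_{(x₁+x₂,y)} yields κ₃((x₁,y),·)=N((y+x₁)/2,1/2)⊗δ_y, whose first marginal depends on y; hence κ₃(·,A×ℝ) is not σ(X₁)-measurable for general Borel A, so the composed pair is not admissible. -/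
/-!
The sum and difference `U = N₂ + N_Y`, `V = N₂ - N_Y` of two independent standard normals are
independent `N(0, 2)` variables (compare characteristic functions). In these coordinates the SCM
reads `(X₁, X₂, Y) = (N₁, U/2 + V/2, N₁ + U)` with `N₁, U, V` independent, so `(X₁, Y)` only sees
`(N₁, U)`, and given `(X₁, Y) = (x₁, y)` we have `X₂ = (y - x₁)/2 + V/2`, distributed as
`N((y - x₁)/2, 1/2)`. Since `κ₁(p, ·)` lives on the fibre of `(X₁, Y)` over `p`, integrating it
against the law of `(X₁, Y)` gives the defining identity of a conditional probability.
Pushing `κ₁((x₁, y), ·)` through `(x₁, x₂, y) ↦ (x₁ + x₂, y)` only shifts the Gaussian to mean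
`(y + x₁)/2`. Gaussians with different means differ on some Borel set `A`, whereas a
`σ(X₁)`-measurable function of `(x₁, y)` cannot depend on `y`.
-/

open MeasureTheory ProbabilityTheory
open scoped NNReal ENNReal

namespace MeasureTheory

variable {α β γ : Type*} [MeasurableSpace α] [MeasurableSpace β] [MeasurableSpace γ]

lemma map_prodMk_apply (ρ : Measure β) {g : α × β → γ} (hg : Measurable g) (a : α)
    {s : Set γ} (hs : MeasurableSet s) :
    ρ.map (fun b => g (a, b)) s = ρ (Prod.mk a ⁻¹' (g ⁻¹' s)) :=
  Measure.map_apply (hg.comp measurable_prodMk_left) hs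

lemma measurable_map_prodMk {ρ : Measure β} [SFinite ρ] {g : α × β → γ} (hg : Measurable g) :
    Measurable fun a => ρ.map (fun b => g (a, b)) := by
  refine Measure.measurable_of_measurable_coe _ fun s hs => ?_
  simp_rw [map_prodMk_apply ρ hg _ hs]
  exact measurable_measure_prodMk_left (hg hs)

lemma Measure.bind_map_eq_map_prod (μ : Measure α) (ρ : Measure β) [SFinite ρ]
    {g : α × β → γ} (hg : Measurable g) :
    μ.bind (fun a => ρ.map (fun b => g (a, b))) = (μ.prod ρ).map g := by
  ext s hs
  rw [Measure.map_apply hg hs, Measure.prod_apply (hg hs),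
    Measure.bind_apply hs (measurable_map_prodMk hg).aemeasurable]
  simp_rw [map_prodMk_apply ρ hg _ hs]

lemma setLIntegral_comp_eq_measure_inter {μ : Measure α} {ν : Measure β} {κ : β → Measure α}
    {f : α → β} (hf : Measurable f) (hκ : Measurable κ) (hμ : ν.bind κ = μ)
    (hfib : ∀ b, (κ b).map f = Measure.dirac b) {A : Set α} (hA : MeasurableSet A)
    {B : Set β} (hB : MeasurableSet B) :
    ∫⁻ x in f ⁻¹' B, κ (f x) A ∂μ = μ (A ∩ f ⁻¹' B) := by
  set g := B.indicator fun b => κ b A with hg_def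
  have hg : Measurable g := ((Measure.measurable_coe hA).comp hκ).indicator hB
  have hnull : ∀ b {C}, MeasurableSet C → b ∉ C → κ b (f ⁻¹' C) = 0 := fun b C hC hb => by
    rw [← Measure.map_apply hf hC, hfib, Measure.dirac_apply' _ hC, Set.indicator_of_notMem hb]
  have hfiber : ∀ b, κ b (A ∩ f ⁻¹' B) = g b := by
    intro b
    by_cases hb : b ∈ B
    · rw [hg_def, Set.indicator_of_mem hb]
      exact measure_inter_conull (hnull b hB.compl (fun h => h hb))
    · rw [hg_def, Set.indicator_of_notMem hb]
      exact measure_mono_null Set.inter_subset_right (hnull b hB hb)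
  have hint : ∀ b, ∫⁻ x, g (f x) ∂κ b = g b := fun b => by
    rw [← lintegral_map hg hf, hfib, lintegral_dirac' _ hg]
  calc ∫⁻ x in f ⁻¹' B, κ (f x) A ∂μ = ∫⁻ x, g (f x) ∂(ν.bind κ) := by
        rw [hμ, ← lintegral_indicator (hf hB)]
        rfl
    _ = ∫⁻ b, κ b (A ∩ f ⁻¹' B) ∂ν := by
        rw [Measure.lintegral_bind (f := fun x => g (f x)) hκ.aemeasurable
          (hg.comp hf).aemeasurable]
        simp_rw [hint, hfiber]
    _ = μ (A ∩ f ⁻¹' B) := by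
        rw [← hμ, Measure.bind_apply (hA.inter (hf hB)) hκ.aemeasurable]

omit [MeasurableSpace β] in
lemma apply_eq_of_measurable_comap_fst [MeasurableSingletonClass γ] {f : α × β → γ}
    (hf : Measurable[MeasurableSpace.comap Prod.fst ‹_›] f) (a : α) (b b' : β) :
    f (a, b) = f (a, b') := by
  obtain ⟨t, -, ht⟩ := hf (measurableSet_singleton (f (a, b)))
  have hab : (a, b) ∈ Prod.fst ⁻¹' t := by rw [ht]; rfl
  have hab' : (a, b') ∈ Prod.fst ⁻¹' t := hab
  rw [ht] at hab'
  exact hab'.symm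

omit [MeasurableSpace β] in
lemma exists_not_measurable_comap_fst {κ : α × β → Measure γ} {a : α} {b b' : β}
    (h : κ (a, b) ≠ κ (a, b')) :
    ∃ A, MeasurableSet A ∧ ¬ Measurable[MeasurableSpace.comap Prod.fst ‹_›] fun p => κ p A := by
  by_contra! hmeas
  exact h (Measure.ext fun A hA => apply_eq_of_measurable_comap_fst (hmeas A hA) a b b')

end MeasureTheory

namespace ProbabilityTheory

lemma charFunDual_eq_charFun_apply_one (μ : Measure ℝ) (L : StrongDual ℝ ℝ) :
    charFunDual μ L = charFun μ (L 1) := by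
  obtain ⟨c, rfl⟩ : ∃ c : ℝ, L = c • ContinuousLinearMap.id ℝ ℝ := ⟨L 1, by ext; simp⟩
  rw [charFunDual_eq_charFun_map_one]
  change charFun (μ.map (c * ·)) 1 = _
  simp [charFun_map_mul]

lemma gaussianReal_prod_map_add_sub (m₁ m₂ : ℝ) (v : ℝ≥0) :
    ((gaussianReal m₁ v).prod (gaussianReal m₂ v)).map (fun p => (p.1 + p.2, p.1 - p.2))
      = (gaussianReal (m₁ + m₂) (2 * v)).prod (gaussianReal (m₁ - m₂) (2 * v)) := by
  let S : ℝ × ℝ →L[ℝ] ℝ × ℝ :=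
    (ContinuousLinearMap.fst ℝ ℝ ℝ + .snd ℝ ℝ ℝ).prod (.fst ℝ ℝ ℝ - .snd ℝ ℝ ℝ)
  change Measure.map S _ = _
  refine Measure.ext_of_charFunDual (funext fun L => ?_)
  have hinl : L (S (1, 0)) = L (1, 0) + L (0, 1) := by rw [← map_add]; simp [S]
  have hinr : L (S (0, 1)) = L (1, 0) - L (0, 1) := by rw [← map_sub]; simp [S]
  simp only [charFunDual_map, charFunDual_prod, charFunDual_eq_charFun_apply_one,
    charFun_gaussianReal, ← Complex.exp_add, ContinuousLinearMap.comp_apply,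
    ContinuousLinearMap.inl_apply, ContinuousLinearMap.inr_apply, hinl, hinr]
  congr 1
  push_cast
  ring

lemma gaussianReal_two_map_add_half (c : ℝ) :
    (gaussianReal 0 2).map (fun v => c + v / 2) = gaussianReal c (1 / 2) := by
  have hv : (2 : ℝ≥0) / .mk (2 ^ 2) (sq_nonneg _) = 1 / 2 := by
    ext
    norm_num [NNReal.coe_div]
  rw [← Function.comp_def (c + ·) (· / 2), ← Measure.map_map (by fun_prop) (by fun_prop),
    gaussianReal_map_div_const, gaussianReal_map_const_add, hv, zero_div, zero_add]

end ProbabilityTheory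

namespace GaussianSCM

noncomputable section

def scmLaw : Measure (ℝ × ℝ × ℝ) :=
  Measure.map (fun p : ℝ × ℝ × ℝ => (p.1, p.2.1, p.1 + p.2.1 + p.2.2))
    ((gaussianReal 0 1).prod ((gaussianReal 0 1).prod (gaussianReal 0 1)))

def inclusionKernel (p : ℝ × ℝ) : Measure (ℝ × ℝ × ℝ) :=
  (Measure.dirac p.1).prod ((gaussianReal ((p.2 - p.1) / 2) (1 / 2)).prod (Measure.dirac p.2))

abbrev projX₁Y (q : ℝ × ℝ × ℝ) : ℝ × ℝ := (q.1, q.2.2)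

abbrev abstraction (q : ℝ × ℝ × ℝ) : ℝ × ℝ := (q.1 + q.2.1, q.2.2)

lemma scmLaw_eq_map :
    scmLaw = ((gaussianReal 0 1).prod ((gaussianReal 0 2).prod (gaussianReal 0 2))).map
      (fun n => (n.1, n.2.1 / 2 + n.2.2 / 2, n.1 + n.2.1)) := by
  have hS := gaussianReal_prod_map_add_sub 0 0 1
  simp only [add_zero, sub_zero, mul_one] at hS
  rw [← hS, ← Measure.map_id (μ := gaussianReal 0 1),
    Measure.map_prod_map _ _ measurable_id (by fun_prop),
    Measure.map_map (by fun_prop) (by fun_prop), Measure.map_id, scmLaw]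
  congr 1
  funext ⟨x, a, b⟩
  change (x, a, x + a + b) = (x, (a + b) / 2 + (a - b) / 2, x + (a + b))
  ring_nf

lemma scmLaw_map_projX₁Y :
    scmLaw.map projX₁Y
      = ((gaussianReal 0 1).prod (gaussianReal 0 2)).map (fun n => (n.1, n.1 + n.2)) := by
  have hfactor : projX₁Y ∘ (fun n : ℝ × ℝ × ℝ => (n.1, n.2.1 / 2 + n.2.2 / 2, n.1 + n.2.1))
      = (fun n : ℝ × ℝ => (n.1, n.1 + n.2)) ∘ Prod.map id Prod.fst := rfl
  rw [scmLaw_eq_map, Measure.map_map (by fun_prop) (by fun_prop), hfactor,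
    ← Measure.map_map (by fun_prop) (by fun_prop),
    ← Measure.map_prod_map _ _ measurable_id measurable_fst, Measure.map_id, Measure.map_fst_prod,
    measure_univ, one_smul]

lemma inclusionKernel_eq_map (p : ℝ × ℝ) :
    inclusionKernel p
      = (gaussianReal 0 2).map (fun v => (p.1, (p.2 - p.1) / 2 + v / 2, p.2)) := by
  rw [inclusionKernel, ← gaussianReal_two_map_add_half, Measure.prod_dirac,
    Measure.map_map (by fun_prop) (by fun_prop), Measure.dirac_prod,
    Measure.map_map (by fun_prop) (by fun_prop)]
  rfl

lemma measurable_inclusionKernel : Measurable inclusionKernel := by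
  rw [funext inclusionKernel_eq_map]
  exact measurable_map_prodMk
    (g := fun x : (ℝ × ℝ) × ℝ => (x.1.1, (x.1.2 - x.1.1) / 2 + x.2 / 2, x.1.2)) (by fun_prop)

lemma inclusionKernel_map_projX₁Y (p : ℝ × ℝ) :
    (inclusionKernel p).map projX₁Y = Measure.dirac p := by
  rw [inclusionKernel_eq_map, Measure.map_map (by fun_prop) (by fun_prop)]
  simp [Function.comp_def]

lemma scmLaw_map_projX₁Y_bind_inclusionKernel :
    (scmLaw.map projX₁Y).bind inclusionKernel = scmLaw := by
  set N := gaussianReal 0 2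
  have hprod : (((gaussianReal 0 1).prod N).map fun n => (n.1, n.1 + n.2)).prod N
      = (((gaussianReal 0 1).prod N).prod N).map (Prod.map (fun n => (n.1, n.1 + n.2)) id) := by
    simpa using Measure.map_prod_map ((gaussianReal 0 1).prod N) N
      (f := fun n : ℝ × ℝ => (n.1, n.1 + n.2)) (by fun_prop) measurable_id
  rw [scmLaw_map_projX₁Y, funext inclusionKernel_eq_map,
    Measure.bind_map_eq_map_prod _ _
      (g := fun x : (ℝ × ℝ) × ℝ => (x.1.1, (x.1.2 - x.1.1) / 2 + x.2 / 2, x.1.2)) (by fun_prop),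
    hprod, Measure.map_map (by fun_prop) (by fun_prop), scmLaw_eq_map, ← Measure.prodAssoc_prod,
    Measure.map_map (by fun_prop) MeasurableEquiv.prodAssoc.measurable]
  congr 1
  funext ⟨⟨x, u⟩, v⟩
  change (x, (x + u - x) / 2 + v / 2, x + u) = (x, u / 2 + v / 2, x + u)
  ring_nf

lemma inclusionKernel_bind_abstraction (p : ℝ × ℝ) :
    (inclusionKernel p).bind (fun q => Measure.dirac (abstraction q))
      = (gaussianReal ((p.2 + p.1) / 2) (1 / 2)).prod (Measure.dirac p.2) := by
  rw [Measure.bind_dirac_eq_map _ (by fun_prop), inclusionKernel_eq_map,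
    Measure.map_map (by fun_prop) (by fun_prop), Measure.prod_dirac,
    ← gaussianReal_two_map_add_half, Measure.map_map (by fun_prop) (by fun_prop)]
  congr 1
  funext v
  change (p.1 + ((p.2 - p.1) / 2 + v / 2), p.2) = ((p.2 + p.1) / 2 + v / 2, p.2)
  ring_nf

end

end GaussianSCM

open GaussianSCM in
theorem composition_fails_without_abstraction_general
    (P : Measure (ℝ × ℝ × ℝ))
    (hP : P = Measure.map (fun p : ℝ × ℝ × ℝ => (p.1, p.2.1, p.1 + p.2.1 + p.2.2))
        ((gaussianReal 0 1).prod ((gaussianReal 0 1).prod (gaussianReal 0 1))))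
    (κ1 : ℝ × ℝ → Measure (ℝ × ℝ × ℝ))
    (hκ1 : ∀ p : ℝ × ℝ, κ1 p = (Measure.dirac p.1).prod
        ((gaussianReal ((p.2 - p.1) / 2) (1 / 2)).prod (Measure.dirac p.2)))
    (κ2 : ℝ × ℝ × ℝ → Measure (ℝ × ℝ))
    (hκ2 : ∀ q : ℝ × ℝ × ℝ, κ2 q = Measure.dirac (q.1 + q.2.1, q.2.2)) :
    -- (a) κ₁ ∘ (X₁, Y) is a regular conditional probability of ℙ given σ(X₁, Y)
    (∀ A : Set (ℝ × ℝ × ℝ), MeasurableSet A → ∀ B : Set (ℝ × ℝ), MeasurableSet B →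
      ∫⁻ q in (fun q : ℝ × ℝ × ℝ => (q.1, q.2.2)) ⁻¹' B, κ1 (q.1, q.2.2) A ∂P
        = P (A ∩ (fun q : ℝ × ℝ × ℝ => (q.1, q.2.2)) ⁻¹' B)) ∧
    -- (b) the concatenated kernel κ₃ = κ₁ ∘ κ₂
    (∀ p : ℝ × ℝ, (κ1 p).bind κ2
      = (gaussianReal ((p.2 + p.1) / 2) (1 / 2)).prod (Measure.dirac p.2)) ∧
    -- (c) the concatenation is not admissible: κ₃(·, A × ℝ) is not σ(X₁)-measurable
    (∃ A : Set ℝ, MeasurableSet A ∧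
      ¬ Measurable[MeasurableSpace.comap (fun p : ℝ × ℝ => p.1) inferInstance]
        fun p : ℝ × ℝ => ((κ1 p).bind κ2) (A ×ˢ (Set.univ : Set ℝ))) := by
  obtain rfl : P = scmLaw := hP
  obtain rfl : κ1 = inclusionKernel := funext hκ1
  obtain rfl : κ2 = fun q => Measure.dirac (abstraction q) := funext hκ2
  refine ⟨fun A hA B hB => setLIntegral_comp_eq_measure_inter (by fun_prop)
      measurable_inclusionKernel scmLaw_map_projX₁Y_bind_inclusionKernel
      inclusionKernel_map_projX₁Y hA hB, inclusionKernel_bind_abstraction, ?_⟩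
  obtain ⟨A, hA, hA_not⟩ := exists_not_measurable_comap_fst
    (κ := fun p : ℝ × ℝ => gaussianReal ((p.2 + p.1) / 2) (1 / 2)) (a := 0) (b := 0) (b' := 2)
    (by norm_num [gaussianReal_ext_iff])
  refine ⟨A, hA, ?_⟩
  simpa [inclusionKernel_bind_abstraction, Measure.prod_prod] using hA_not

/-- Failure of composition without the abstraction hypothesis.  In the
Gaussian SCM `X₁ = N₁`, `X₂ = N₂`, `Y = X₁ + X₂ + N_Y` (independent standard normals, joint
law `ℙ` of `(X₁, X₂, Y)` on `ℝ³`):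
(a) the inclusion kernel `κ₁((x₁,y), ·) = δ_{x₁} ⊗ N((y−x₁)/2, 1/2) ⊗ δ_y` is a version of
the conditional probability of `ℙ` given `(X₁, Y)` (i.e. the conditional law of `X₂` given
`X₁ = x₁, Y = y` is `N((y−x₁)/2, 1/2)`);
(b) composing `κ₁` with the abstraction kernel `κ₂((x₁,x₂,y), ·) = δ_{(x₁+x₂, y)}` yields
`κ₃((x₁,y), ·) = N((y+x₁)/2, 1/2) ⊗ δ_y`;
(c) there is a Borel `A` such that `κ₃(·, A × ℝ)` is not `σ(X₁)`-measurable, so the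
composed pair is not admissible. -/
theorem composition_fails_without_abstraction
    (P : Measure (ℝ × ℝ × ℝ)) [IsProbabilityMeasure P]
    (hP : P = Measure.map (fun p : ℝ × ℝ × ℝ => (p.1, p.2.1, p.1 + p.2.1 + p.2.2))
        ((gaussianReal 0 1).prod ((gaussianReal 0 1).prod (gaussianReal 0 1))))
    (κ1 : ℝ × ℝ → Measure (ℝ × ℝ × ℝ))
    (hκ1 : ∀ p : ℝ × ℝ, κ1 p = (Measure.dirac p.1).prod
        ((gaussianReal ((p.2 - p.1) / 2) (1 / 2)).prod (Measure.dirac p.2)))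
    (κ2 : ℝ × ℝ × ℝ → Measure (ℝ × ℝ))
    (hκ2 : ∀ q : ℝ × ℝ × ℝ, κ2 q = Measure.dirac (q.1 + q.2.1, q.2.2)) :
    -- (a) κ₁ ∘ (X₁, Y) is a regular conditional probability of ℙ given σ(X₁, Y)
    (∀ A : Set (ℝ × ℝ × ℝ), MeasurableSet A → ∀ B : Set (ℝ × ℝ), MeasurableSet B →
      ∫⁻ q in (fun q : ℝ × ℝ × ℝ => (q.1, q.2.2)) ⁻¹' B, κ1 (q.1, q.2.2) A ∂P
        = P (A ∩ (fun q : ℝ × ℝ × ℝ => (q.1, q.2.2)) ⁻¹' B)) ∧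
    -- (b) the concatenated kernel κ₃ = κ₁ ∘ κ₂
    (∀ p : ℝ × ℝ, (κ1 p).bind κ2
      = (gaussianReal ((p.2 + p.1) / 2) (1 / 2)).prod (Measure.dirac p.2)) ∧
    -- (c) the concatenation is not admissible: κ₃(·, A × ℝ) is not σ(X₁)-measurable
    (∃ A : Set ℝ, MeasurableSet A ∧
      ¬ Measurable[MeasurableSpace.comap (fun p : ℝ × ℝ => p.1) inferInstance]
        fun p : ℝ × ℝ => ((κ1 p).bind κ2) (A ×ˢ (Set.univ : Set ℝ))) :=
  composition_fails_without_abstraction_general P hP κ1 hκ1 κ2 hκ2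
end
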